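/- arXiv:2108.12874 — 6 statements merged into one kernel-verified Lean document; each statement's English description precedes it below -/
import Mathlib

section
/- Let (x₀,t₀) ∈ ℝ², let F be a ℂ-valued function of two real variables that is real-analytic in a neighborhood of (x₀,t₀), and let Q₀ : ℂ → ℂ be analytic in a neighborhood of F(x₀,t₀). Assume that Q₀(F(x,t)) = x·(F(x,t)+1) − t·F(x,t) for all (x,t) in some neighborhood of (x₀,t₀), and that Q₀'(F(x₀,t₀)) − x₀ + t₀ ≠ 0. Then F satisfies the complex Burgers equation at (x₀,t₀) in cleared-denominator form: (F(x₀,t₀)+1)·∂ₜF(x₀,t₀) + F(x₀,t₀)·∂ₓF(x₀,t₀) = 0 (equivalently, ∂ₜF + ∂ₓF·F/(F+1) = 0 when F(x₀,t₀) ≠ −1). -/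
/-- Under the same hypotheses, `F` satisfies the complex Burgers equation at `(x₀, t₀)`
in cleared-denominator form:
`(F (x₀,t₀) + 1) ∂ₜF (x₀,t₀) + F (x₀,t₀) ∂ₓF (x₀,t₀) = 0`. -/
theorem stmt_2 (x₀ t₀ : ℝ) (F : ℝ × ℝ → ℂ) (Q₀ : ℂ → ℂ)
    (hF : AnalyticAt ℝ F (x₀, t₀))
    (hQ₀ : AnalyticAt ℂ Q₀ (F (x₀, t₀)))
    (heq : ∀ᶠ p : ℝ × ℝ in nhds (x₀, t₀),
      Q₀ (F p) = (p.1 : ℂ) * (F p + 1) - (p.2 : ℂ) * F p)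
    (hne : deriv Q₀ (F (x₀, t₀)) - (x₀ : ℂ) + (t₀ : ℂ) ≠ 0) :
    (F (x₀, t₀) + 1) * deriv (fun t : ℝ => F (x₀, t)) t₀
      + F (x₀, t₀) * deriv (fun x : ℝ => F (x, t₀)) x₀ = 0 := by
  set z := F (x₀, t₀) with hz
  set c := deriv Q₀ z with hc
  have hFd : HasFDerivAt F (fderiv ℝ F (x₀, t₀)) (x₀, t₀) :=
    hF.differentiableAt.hasFDerivAt
  set L := fderiv ℝ F (x₀, t₀)
  -- curves
  have hcurx : HasDerivAt (fun x : ℝ => ((x, t₀) : ℝ × ℝ)) (1, 0) x₀ :=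
    HasDerivAt.prodMk (hasDerivAt_id x₀) (hasDerivAt_const x₀ t₀)
  have hcurt : HasDerivAt (fun t : ℝ => ((x₀, t) : ℝ × ℝ)) (0, 1) t₀ :=
    HasDerivAt.prodMk (hasDerivAt_const t₀ x₀) (hasDerivAt_id t₀)
  have hgx : HasDerivAt (fun x : ℝ => F (x, t₀)) (L (1, 0)) x₀ :=
    hFd.comp_hasDerivAt x₀ hcurx
  have hgt : HasDerivAt (fun t : ℝ => F (x₀, t)) (L (0, 1)) t₀ :=
    hFd.comp_hasDerivAt t₀ hcurt
  set a := L (1, 0)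
  set b := L (0, 1)
  have hQd : HasDerivAt Q₀ c z := hQ₀.differentiableAt.hasDerivAt
  have hofReal : ∀ u : ℝ, HasDerivAt (fun s : ℝ => (s : ℂ)) 1 u := by
    intro u
    simpa using HasDerivAt.ofReal_comp (hasDerivAt_id u)
  -- eventual equality along slices
  have htendx : Filter.Tendsto (fun x : ℝ => ((x, t₀) : ℝ × ℝ)) (nhds x₀) (nhds (x₀, t₀)) := by
    simpa using hcurx.continuousAt.tendsto
  have htendt : Filter.Tendsto (fun t : ℝ => ((x₀, t) : ℝ × ℝ)) (nhds t₀) (nhds (x₀, t₀)) := by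
    simpa using hcurt.continuousAt.tendsto
  have heqx : ∀ᶠ x : ℝ in nhds x₀,
      Q₀ (F (x, t₀)) = (x : ℂ) * (F (x, t₀) + 1) - (t₀ : ℂ) * F (x, t₀) :=
    htendx.eventually heq
  have heqt : ∀ᶠ t : ℝ in nhds t₀,
      Q₀ (F (x₀, t)) = (x₀ : ℂ) * (F (x₀, t) + 1) - (t : ℂ) * F (x₀, t) :=
    htendt.eventually heq
  -- differentiate in x
  have hL1 : HasDerivAt (fun x : ℝ => Q₀ (F (x, t₀))) (c * a) x₀ :=
    hQd.comp x₀ hgx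
  have hR1 : HasDerivAt (fun x : ℝ => (x : ℂ) * (F (x, t₀) + 1) - (t₀ : ℂ) * F (x, t₀))
      (1 * (z + 1) + (x₀ : ℂ) * a - (t₀ : ℂ) * a) x₀ := by
    have h1 : HasDerivAt (fun x : ℝ => (x : ℂ) * (F (x, t₀) + 1))
        (1 * (z + 1) + (x₀ : ℂ) * a) x₀ :=
      (hofReal x₀).mul (hgx.add_const 1)
    have h2 : HasDerivAt (fun x : ℝ => (t₀ : ℂ) * F (x, t₀)) ((t₀ : ℂ) * a) x₀ :=
      hgx.const_mul _
    exact h1.sub h2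
  have hE1 : c * a = 1 * (z + 1) + (x₀ : ℂ) * a - (t₀ : ℂ) * a := by
    have := hR1.congr_of_eventuallyEq (heqx.mono fun x hx => hx)
    exact hL1.unique this
  -- differentiate in t
  have hL2 : HasDerivAt (fun t : ℝ => Q₀ (F (x₀, t))) (c * b) t₀ :=
    hQd.comp t₀ hgt
  have hR2 : HasDerivAt (fun t : ℝ => (x₀ : ℂ) * (F (x₀, t) + 1) - (t : ℂ) * F (x₀, t))
      ((x₀ : ℂ) * b - (1 * z + (t₀ : ℂ) * b)) t₀ := by
    have h1 : HasDerivAt (fun t : ℝ => (x₀ : ℂ) * (F (x₀, t) + 1)) ((x₀ : ℂ) * b) t₀ :=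
      (hgt.add_const 1).const_mul _
    have h2 : HasDerivAt (fun t : ℝ => (t : ℂ) * F (x₀, t)) (1 * z + (t₀ : ℂ) * b) t₀ :=
      (hofReal t₀).mul hgt
    exact h1.sub h2
  have hE2 : c * b = (x₀ : ℂ) * b - (1 * z + (t₀ : ℂ) * b) := by
    have := hR2.congr_of_eventuallyEq (heqt.mono fun t ht => ht)
    exact hL2.unique this
  -- combine
  rw [hgt.deriv, hgx.deriv]
  have key : (c - (x₀ : ℂ) + (t₀ : ℂ)) * ((z + 1) * b + z * a) = 0 := by
    have e1 : (c - (x₀ : ℂ) + (t₀ : ℂ)) * a = z + 1 := by linear_combination hE1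
    have e2 : (c - (x₀ : ℂ) + (t₀ : ℂ)) * b = -z := by linear_combination hE2
    linear_combination (z + 1) * e2 + z * e1
  exact (mul_eq_zero.mp key).resolve_left hne
end

section
/- Let f ∈ ℂ with f ≠ −1, let Q₀ : ℂ → ℂ be analytic in a neighborhood of f with Q₀''(f) ≠ 0, and let x, t ∈ ℝ satisfy Q₀(f) = x·(f+1) − t·f and Q₀'(f) = x − t. Then there exist constants C > 0 and δ > 0 such that for all x̃, t̃ ∈ ℝ and f̃ ∈ ℂ with |f̃ − f| ≤ δ satisfying Q₀(f̃) = x̃·(f̃+1) − t̃·f̃ and Q₀'(f̃) = x̃ − t̃, one has |x̃ − x − (f/(f+1))·(t̃ − t) + (t̃ − t)²/(2·(f+1)³·Q₀''(f))| ≤ C·|t̃ − t|³. That is, along the locus of double roots the expansion x̃ − x = 𝔩·(t̃−t) + 𝔮·(t̃−t)² + O(|t̃−t|³) holds with 𝔩 = f/(f+1) and 𝔮 = −(1/2)·(f+1)⁻³·Q₀''(f)⁻¹. -/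
open Asymptotics Filter

private lemma analyticAt_deriv' {F : ℂ → ℂ} {z : ℂ} (h : AnalyticAt ℂ F z) :
    AnalyticAt ℂ (deriv F) z := by
  obtain ⟨s, hs, hF⟩ := h.exists_mem_nhds_analyticOnNhd
  exact hF.deriv z (mem_of_mem_nhds hs)

private lemma cube_bound (g : ℂ → ℂ) (f : ℂ) (hg : AnalyticAt ℂ g f) (h0 : g f = 0)
    (h1 : deriv g f = 0) (h2 : deriv (deriv g) f = 0) :
    ∃ C > 0, ∃ δ > 0, ∀ z : ℂ, ‖z - f‖ ≤ δ → ‖g z‖ ≤ C * ‖z - f‖ ^ 3 := by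
  obtain ⟨p, hp⟩ := hg
  have hc0 : p.coeff 0 = 0 := by
    have := hp.coeff_zero 1
    rw [h0] at this
    exact this
  have hc1 : p.coeff 1 = 0 := by
    have := hp.deriv
    rw [h1] at this
    exact this.symm
  have hc2 : p.coeff 2 = 0 := by
    obtain ⟨r, hpr⟩ := hp
    have h := hpr.factorial_smul (y := (1:ℂ)) 2
    have h2' : iteratedFDeriv ℂ 2 g f (fun _ => (1:ℂ)) = 0 := by
      rw [← iteratedDeriv_eq_iteratedFDeriv]
      rw [show (2:ℕ) = 1 + 1 from rfl, iteratedDeriv_succ, iteratedDeriv_one]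
      exact h2
    rw [h2'] at h
    have : (Nat.factorial 2 : ℂ) ≠ 0 := by norm_num [Nat.factorial]
    have h' : (Nat.factorial 2 : ℕ) • p.coeff 2 = 0 := h
    simpa [Nat.factorial] using smul_eq_zero.mp h'
  have hps : ∀ y : ℂ, p.partialSum 3 y = 0 := by
    intro y
    simp [FormalMultilinearSeries.partialSum, Finset.sum_range_succ,
      FormalMultilinearSeries.apply_eq_pow_smul_coeff, hc0, hc1, hc2]
  have hO := hp.isBigO_sub_partialSum_pow 3
  have hO' : (fun y : ℂ => g (f + y)) =O[nhds 0] fun y => ‖y‖ ^ 3 := by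
    simpa [hps] using hO
  rw [isBigO_iff] at hO'
  obtain ⟨C, hC⟩ := hO'
  obtain ⟨ε, hε, hball⟩ := Metric.eventually_nhds_iff.mp hC
  refine ⟨max C 1, by positivity, ε/2, by positivity, fun z hz => ?_⟩
  have h1' := hball (y := z - f) (by simpa [dist_eq_norm] using lt_of_le_of_lt hz (by linarith))
  rw [add_sub_cancel] at h1'
  have : ‖‖z - f‖ ^ 3‖ = ‖z - f‖ ^ 3 := by
    rw [Real.norm_eq_abs, abs_of_nonneg (by positivity)]
  rw [this] at h1'
  calc ‖g z‖ ≤ C * ‖z - f‖ ^ 3 := h1'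
    _ ≤ max C 1 * ‖z - f‖ ^ 3 := by
        apply mul_le_mul_of_nonneg_right (le_max_left _ _) (by positivity)

private lemma lin_lower (g : ℂ → ℂ) (f a : ℂ) (hd : HasDerivAt g a f) (h0 : g f = 0)
    (ha : a ≠ 0) :
    ∃ δ > 0, ∀ z : ℂ, ‖z - f‖ ≤ δ → ‖a‖ / 2 * ‖z - f‖ ≤ ‖g z‖ := by
  have hlo := hasDerivAt_iff_isLittleO.mp hd
  have hev := hlo.def (show (0:ℝ) < ‖a‖/2 from half_pos (norm_pos_iff.mpr ha))
  obtain ⟨ε, hε, hb⟩ := Metric.eventually_nhds_iff.mp hev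
  refine ⟨ε/2, half_pos hε, fun z hz => ?_⟩
  have h1 := hb (y := z) (by rw [dist_eq_norm]; linarith)
  rw [h0, sub_zero] at h1
  have hsm : ‖(z - f) • a‖ = ‖a‖ * ‖z - f‖ := by rw [norm_smul]; ring
  have h3 : ‖(z - f) • a‖ - ‖g z‖ ≤ ‖g z - (z - f) • a‖ := by
    rw [norm_sub_rev]; exact norm_sub_norm_le _ _
  rw [hsm] at h3
  nlinarith [norm_nonneg (z - f), norm_nonneg (g z)]


/-- Second-order expansion of the arctic boundary at a double root: along the locus of
double roots of `Q₀ z = x (z+1) - t z`, one has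
`x̃ - x = 𝔩 (t̃ - t) + 𝔮 (t̃ - t)² + O(|t̃ - t|³)` with `𝔩 = f/(f+1)` and
`𝔮 = -(1/2) (f+1)⁻³ Q₀''(f)⁻¹`. -/
theorem stmt_3 (f : ℂ) (hf : f ≠ -1) (Q₀ : ℂ → ℂ) (hQ₀ : AnalyticAt ℂ Q₀ f)
    (hQ'' : deriv (deriv Q₀) f ≠ 0) (x t : ℝ)
    (h1 : Q₀ f = (x : ℂ) * (f + 1) - (t : ℂ) * f)
    (h2 : deriv Q₀ f = (x : ℂ) - (t : ℂ)) :
    ∃ C > 0, ∃ δ > 0, ∀ (x' t' : ℝ) (f' : ℂ), ‖f' - f‖ ≤ δ →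
      Q₀ f' = (x' : ℂ) * (f' + 1) - (t' : ℂ) * f' →
      deriv Q₀ f' = (x' : ℂ) - (t' : ℂ) →
      ‖(x' : ℂ) - (x : ℂ) - (f / (f + 1)) * ((t' : ℂ) - (t : ℂ))
          + ((t' : ℂ) - (t : ℂ)) ^ 2 / (2 * (f + 1) ^ 3 * deriv (deriv Q₀) f)‖
        ≤ C * |t' - t| ^ 3 := by
  have hf1 : f + 1 ≠ 0 := fun h => hf (by linear_combination h)
  set dd : ℂ → ℂ := deriv (deriv Q₀) with hdd
  set c2 : ℂ := dd f with hc2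
  set X : ℂ → ℂ := fun z => Q₀ z - z * deriv Q₀ z with hXdef
  set T : ℂ → ℂ := fun z => Q₀ z - (z + 1) * deriv Q₀ z with hTdef
  set g : ℂ → ℂ := fun z =>
    X z - (x : ℂ) - (f / (f + 1)) * (T z - (t : ℂ))
      + (T z - (t : ℂ)) ^ 2 / (2 * (f + 1) ^ 3 * c2) with hgdef
  have hXf : X f = (x : ℂ) := by simp only [hXdef]; rw [h1, h2]; ring
  have hTf : T f = (t : ℂ) := by simp only [hTdef]; rw [h1, h2]; ring
  -- eventual derivative formulas
  have hXd : ∀ᶠ z in nhds f, HasDerivAt X (-(z * dd z)) z := by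
    filter_upwards [hQ₀.eventually_analyticAt] with z hz
    have ha := hz.differentiableAt.hasDerivAt
    have hb := (analyticAt_deriv' hz).differentiableAt.hasDerivAt
    have hc := ha.sub ((hasDerivAt_id z).mul hb)
    refine hc.congr_deriv ?_
    simp only [id_eq]
    ring
  have hTd : ∀ᶠ z in nhds f, HasDerivAt T (-((z + 1) * dd z)) z := by
    filter_upwards [hQ₀.eventually_analyticAt] with z hz
    have ha := hz.differentiableAt.hasDerivAt
    have hb := (analyticAt_deriv' hz).differentiableAt.hasDerivAt
    have hc := ha.sub (((hasDerivAt_id z).add_const 1).mul hb)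
    refine hc.congr_deriv ?_
    simp only [id_eq]
    ring
  set Dg : ℂ → ℂ := fun z =>
    -(z * dd z) - f / (f + 1) * -((z + 1) * dd z)
      + 2 * (T z - (t : ℂ)) * -((z + 1) * dd z) / (2 * (f + 1) ^ 3 * c2) with hDgdef
  have hgd : ∀ᶠ z in nhds f, HasDerivAt g (Dg z) z := by
    filter_upwards [hXd, hTd] with z hx ht
    have hTt : HasDerivAt (fun w => T w - (t : ℂ)) (-((z + 1) * dd z)) z := ht.sub_const _
    have hsq : HasDerivAt (fun w => (T w - (t : ℂ)) ^ 2)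
        (2 * (T z - (t : ℂ)) * -((z + 1) * dd z)) z := by
      exact (hTt.pow 2).congr_deriv (by norm_num)
    exact ((hx.sub_const _).sub (hTt.const_mul (f / (f + 1)))).add
      (hsq.div_const (2 * (f + 1) ^ 3 * c2))
  have hderiveq : deriv g =ᶠ[nhds f] Dg := hgd.mono fun z hz => hz.deriv
  have hg'f : deriv g f = 0 := by
    rw [hgd.self_of_nhds.deriv, hDgdef]
    simp only [hTf, sub_self]
    field_simp
    ring
  -- second derivative of g at f
  set c3 : ℂ := deriv dd f with hc3
  have hddd : HasDerivAt dd c3 f :=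
    (analyticAt_deriv' (analyticAt_deriv' hQ₀)).differentiableAt.hasDerivAt
  have hT'f : HasDerivAt T (-((f + 1) * c2)) f := hTd.self_of_nhds
  have hg''f : deriv (deriv g) f = 0 := by
    rw [hderiveq.deriv_eq]
    have t1 : HasDerivAt (fun z => -(z * dd z)) (-(1 * dd f + f * c3)) f :=
      ((hasDerivAt_id f).mul hddd).neg
    have t2 : HasDerivAt (fun z => -((z + 1) * dd z)) (-(1 * dd f + (f + 1) * c3)) f :=
      (((hasDerivAt_id f).add_const 1).mul hddd).neg
    have t3 : HasDerivAt (fun z => 2 * (T z - (t : ℂ)))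
        (2 * -((f + 1) * c2)) f := (hT'f.sub_const _).const_mul 2
    have t4 := ((t3.mul t2).div_const (2 * (f + 1) ^ 3 * c2))
    have t5 := (t1.sub (t2.const_mul (f / (f + 1)))).add t4
    rw [(show HasDerivAt Dg _ f from t5).deriv]
    rw [hTf]
    simp only [sub_self, ← hc2]
    field_simp
    ring
  -- g is analytic at f
  have hganal : AnalyticAt ℂ g f := by
    have hQ' : AnalyticAt ℂ (deriv Q₀) f := analyticAt_deriv' hQ₀
    have hXa : AnalyticAt ℂ X f := hQ₀.sub (analyticAt_id.mul hQ')
    have hTa : AnalyticAt ℂ T f := hQ₀.sub ((analyticAt_id.add analyticAt_const).mul hQ')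
    have hTta : AnalyticAt ℂ (fun z => T z - (t : ℂ)) f := hTa.sub analyticAt_const
    exact ((hXa.sub analyticAt_const).sub (analyticAt_const.mul hTta)).add
      ((hTta.pow 2).div analyticAt_const (by
        exact mul_ne_zero (mul_ne_zero two_ne_zero (pow_ne_zero 3 hf1)) hQ''))
  have hgf : g f = 0 := by
    simp only [hgdef, hXf, hTf, sub_self]
    field_simp
    ring
  obtain ⟨C₁, hC₁, δ₁, hδ₁, hcube⟩ := cube_bound g f hganal hgf hg'f hg''f
  have haK : -((f + 1) * c2) ≠ 0 := neg_ne_zero.mpr (mul_ne_zero hf1 hQ'')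
  obtain ⟨δ₂, hδ₂, hlow⟩ := lin_lower (fun z => T z - (t : ℂ)) f (-((f + 1) * c2))
    (hT'f.sub_const _) (by show T f - (t : ℂ) = 0; rw [hTf, sub_self]) haK
  set a := ‖-((f + 1) * c2)‖ with hadef
  have hapos : 0 < a := norm_pos_iff.mpr haK
  refine ⟨C₁ * (2 / a) ^ 3, by positivity, min δ₁ δ₂, lt_min hδ₁ hδ₂, ?_⟩
  intro x' t' f' hδ heq1 heq2
  have hx' : (x' : ℂ) = X f' := by
    simp only [hXdef]
    rw [heq1, heq2]; ring
  have ht' : (t' : ℂ) = T f' := by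
    simp only [hTdef]
    rw [heq1, heq2]; ring
  have hgoal : (x' : ℂ) - (x : ℂ) - f / (f + 1) * ((t' : ℂ) - (t : ℂ))
      + ((t' : ℂ) - (t : ℂ)) ^ 2 / (2 * (f + 1) ^ 3 * deriv (deriv Q₀) f) = g f' := by
    rw [hx', ht']
  rw [hgoal]
  have hb1 : ‖g f'‖ ≤ C₁ * ‖f' - f‖ ^ 3 := hcube f' (le_trans hδ (min_le_left _ _))
  have hb2 : a / 2 * ‖f' - f‖ ≤ ‖T f' - (t : ℂ)‖ := hlow f' (le_trans hδ (min_le_right _ _))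
  have habs : ‖T f' - (t : ℂ)‖ = |t' - t| := by
    rw [← ht']
    rw [show (t' : ℂ) - (t : ℂ) = ((t' - t : ℝ) : ℂ) by push_cast; ring]
    rw [Complex.norm_real, Real.norm_eq_abs]
  rw [habs] at hb2
  have hf'b : ‖f' - f‖ ≤ 2 / a * |t' - t| := by
    rw [div_mul_eq_mul_div, le_div_iff₀ hapos]
    nlinarith
  calc ‖g f'‖ ≤ C₁ * ‖f' - f‖ ^ 3 := hb1
    _ ≤ C₁ * (2 / a * |t' - t|) ^ 3 := by
        apply mul_le_mul_of_nonneg_left _ (le_of_lt hC₁)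
        exact pow_le_pow_left₀ (norm_nonneg _) hf'b 3
    _ = C₁ * (2 / a) ^ 3 * |t' - t| ^ 3 := by ring
end

section
/- Let f ∈ ℂ with f ≠ −1, let Q₀ : ℂ → ℂ be analytic in a neighborhood of f with Q₀''(f) ≠ 0, and let x, t ∈ ℝ satisfy Q₀(f) = x·(f+1) − t·f and Q₀'(f) = x − t. Then there exist constants C > 0 and δ > 0 such that for all x̃, t̃ ∈ ℝ and f̃ ∈ ℂ with |f̃ − f| ≤ δ satisfying Q₀(f̃) = x̃·(f̃+1) − t̃·f̃ and Q₀'(f̃) = x̃ − t̃, one has |f̃ − f − (t − t̃)/((f+1)·Q₀''(f)) + ((t − t̃)²·(Q₀''(f) + (f+1)·Q₀'''(f)))/(2·(f+1)³·Q₀''(f)³)| ≤ C·|t̃ − t|³. -/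
open Filter Nat


lemma taylor2 (G : ℂ → ℂ) (z : ℂ) (hG : AnalyticAt ℂ G z) :
    ∃ M > 0, ∃ δ > 0, ∀ u : ℂ, ‖u‖ ≤ δ →
      ‖G (z + u) - G z - deriv G z * u - deriv (deriv G) z / 2 * u ^ 2‖ ≤ M * ‖u‖ ^ 3 := by
  obtain ⟨p, hp⟩ := hG
  obtain ⟨r, hpr⟩ := hp
  have hc : ∀ n : ℕ, (n ! : ℂ) * (p n fun _ => 1) = iteratedDeriv n G z := by
    intro n
    have h := hpr.factorial_smul (1 : ℂ) n
    rw [iteratedDeriv_eq_iteratedFDeriv]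
    simpa [nsmul_eq_mul] using h
  have hc0 : (p 0 fun _ => 1) = G z := by
    have := hc 0; simpa [iteratedDeriv_zero] using this
  have hc1 : (p 1 fun _ => 1) = deriv G z := by
    have := hc 1; simpa [iteratedDeriv_one] using this
  have hc2 : (p 2 fun _ => 1) = deriv (deriv G) z / 2 := by
    have h := hc 2
    rw [iteratedDeriv_succ, iteratedDeriv_one] at h
    have h2 : (2 : ℂ) * (p 2 fun _ => 1) = deriv (deriv G) z := by
      simpa [Nat.factorial] using h
    linear_combination h2 / 2
  have hps : ∀ u : ℂ, p.partialSum 3 u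
      = G z + deriv G z * u + deriv (deriv G) z / 2 * u ^ 2 := by
    intro u
    simp only [FormalMultilinearSeries.partialSum, Finset.sum_range_succ, Finset.range_zero,
      Finset.sum_empty, FormalMultilinearSeries.apply_eq_pow_smul_coeff,
      FormalMultilinearSeries.coeff, smul_eq_mul]
    rw [show ((p 0) (1 : Fin 0 → ℂ)) = G z from hc0,
      show ((p 1) (1 : Fin 1 → ℂ)) = deriv G z from hc1,
      show ((p 2) (1 : Fin 2 → ℂ)) = deriv (deriv G) z / 2 from hc2]
    ring
  have hO := (HasFPowerSeriesAt.isBigO_sub_partialSum_pow ⟨r, hpr⟩ 3)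
  obtain ⟨c, hc'⟩ := hO.bound
  rw [Metric.eventually_nhds_iff] at hc'
  obtain ⟨ε, hε, hball⟩ := hc'
  refine ⟨max c 1, lt_of_lt_of_le one_pos (le_max_right _ _), ε / 2, by linarith, ?_⟩
  intro u hu
  have hu' : dist u 0 < ε := by
    rw [_root_.dist_zero_right]; linarith [hu]
  have hb := hball hu'
  rw [hps] at hb
  have he : G (z + u) - (G z + deriv G z * u + deriv (deriv G) z / 2 * u ^ 2)
      = G (z + u) - G z - deriv G z * u - deriv (deriv G) z / 2 * u ^ 2 := by ring
  rw [he] at hb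
  have h3 : ‖‖u‖ ^ 3‖ = ‖u‖ ^ 3 := by
    rw [Real.norm_eq_abs, abs_of_nonneg (by positivity)]
  rw [h3] at hb
  refine hb.trans ?_
  have : (0:ℝ) ≤ ‖u‖ ^ 3 := by positivity
  exact mul_le_mul_of_nonneg_right (le_max_left _ _) this


set_option maxHeartbeats 1000000 in
lemma aux_est (g' g'' : ℂ) (hg : g' ≠ 0) (M δ₁ : ℝ) (hM : 0 < M) (hδ₁ : 0 < δ₁) :
    ∃ C > 0, ∃ δ, 0 < δ ∧ δ ≤ δ₁ ∧ ∀ s u : ℂ, ‖u‖ ≤ δ →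
      ‖s - g' * u - g'' / 2 * u ^ 2‖ ≤ M * ‖u‖ ^ 3 →
      ‖u - s / g' + s ^ 2 * g'' / (2 * g' ^ 3)‖ ≤ C * ‖s‖ ^ 3 := by
  have hg0 : 0 < ‖g'‖ := norm_pos_iff.2 hg
  obtain ⟨a, ha⟩ : ∃ x : ℂ, x = g'' / 2 := ⟨_, rfl⟩
  have haM : 0 < ‖a‖ + M := by positivity
  have hδ : 0 < min δ₁ (min 1 (‖g'‖ / (2 * (‖a‖ + M)))) :=
    lt_min hδ₁ (lt_min one_pos (by positivity))
  set K : ℝ := 2 / ‖g'‖ with hK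
  have hK0 : 0 < K := by positivity
  refine ⟨‖a‖ / ‖g'‖ ^ 3 * ((‖a‖ + M) * K ^ 2 * 3) + M * K ^ 3 / ‖g'‖ + 1, by positivity,
    min δ₁ (min 1 (‖g'‖ / (2 * (‖a‖ + M)))), hδ, min_le_left _ _, ?_⟩
  intro s u hu hRb
  rw [← ha] at hRb
  set R : ℂ := s - g' * u - a * u ^ 2 with hR
  have hRn : ‖R‖ ≤ M * ‖u‖ ^ 3 := hRb
  have hu1 : ‖u‖ ≤ 1 := hu.trans ((min_le_right _ _).trans (min_le_left _ _))
  have hu2 : ‖u‖ ≤ ‖g'‖ / (2 * (‖a‖ + M)) :=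
    hu.trans ((min_le_right _ _).trans (min_le_right _ _))
  have hgu : g' * u = s - a * u ^ 2 - R := by rw [hR]; ring
  have h1 : ‖g'‖ * ‖u‖ ≤ ‖s‖ + (‖a‖ * ‖u‖ ^ 2 + M * ‖u‖ ^ 3) := by
    calc ‖g'‖ * ‖u‖ = ‖g' * u‖ := (norm_mul _ _).symm
      _ = ‖s - a * u ^ 2 - R‖ := by rw [hgu]
      _ ≤ ‖s - a * u ^ 2‖ + ‖R‖ := norm_sub_le _ _
      _ ≤ ‖s‖ + ‖a * u ^ 2‖ + ‖R‖ := by linarith [norm_sub_le s (a * u ^ 2)]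
      _ ≤ ‖s‖ + (‖a‖ * ‖u‖ ^ 2 + M * ‖u‖ ^ 3) := by
          rw [norm_mul, norm_pow]; linarith [hRn]
  have e1 : M * ‖u‖ ^ 3 ≤ M * ‖u‖ ^ 2 := by
    nlinarith [mul_nonneg (mul_nonneg hM.le (sub_nonneg.mpr hu1)) (sq_nonneg ‖u‖)]
  have e2 : (‖a‖ + M) * ‖u‖ ≤ ‖g'‖ / 2 := by
    have h := (le_div_iff₀ (by positivity : (0:ℝ) < 2 * (‖a‖ + M))).mp hu2
    nlinarith [h]
  have h2 : ‖g'‖ * ‖u‖ ≤ 2 * ‖s‖ := by nlinarith [norm_nonneg u, norm_nonneg s, h1, e1, e2]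
  have hKs : ‖u‖ ≤ K * ‖s‖ := by
    rw [hK, div_mul_eq_mul_div, le_div_iff₀ hg0]
    nlinarith [h2]
  have hE : u - s / g' + s ^ 2 * g'' / (2 * g' ^ 3)
      = a / g' ^ 3 * ((a * u ^ 2 + R) * (s + g' * u)) - R / g' := by
    rw [hR, ha]; field_simp; ring
  have t1 : ‖a * u ^ 2 + R‖ ≤ ‖a‖ * ‖u‖ ^ 2 + M * ‖u‖ ^ 3 := by
    calc ‖a * u ^ 2 + R‖ ≤ ‖a * u ^ 2‖ + ‖R‖ := norm_add_le _ _
      _ ≤ ‖a‖ * ‖u‖ ^ 2 + M * ‖u‖ ^ 3 := by rw [norm_mul, norm_pow]; linarith [hRn]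
  have t2 : ‖s + g' * u‖ ≤ ‖s‖ + ‖g'‖ * ‖u‖ := by
    calc ‖s + g' * u‖ ≤ ‖s‖ + ‖g' * u‖ := norm_add_le _ _
      _ = ‖s‖ + ‖g'‖ * ‖u‖ := by rw [norm_mul]
  have hnorm : ‖u - s / g' + s ^ 2 * g'' / (2 * g' ^ 3)‖
      ≤ ‖a‖ / ‖g'‖ ^ 3 * ((‖a‖ * ‖u‖ ^ 2 + M * ‖u‖ ^ 3) * (‖s‖ + ‖g'‖ * ‖u‖))
        + M * ‖u‖ ^ 3 / ‖g'‖ := by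
    rw [hE]
    refine (norm_sub_le _ _).trans ?_
    rw [norm_mul, norm_mul, norm_div, norm_div, norm_pow]
    exact add_le_add
      (mul_le_mul_of_nonneg_left (mul_le_mul t1 t2 (norm_nonneg _) (by positivity))
        (by positivity))
      (by gcongr)
  have hNu2 : ‖u‖ ^ 2 ≤ K ^ 2 * ‖s‖ ^ 2 := by
    calc ‖u‖ ^ 2 ≤ (K * ‖s‖) ^ 2 := pow_le_pow_left₀ (norm_nonneg u) hKs 2
      _ = K ^ 2 * ‖s‖ ^ 2 := by ring
  have hNu3 : ‖u‖ ^ 3 ≤ K ^ 3 * ‖s‖ ^ 3 := by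
    calc ‖u‖ ^ 3 = ‖u‖ * ‖u‖ ^ 2 := by ring
      _ ≤ (K * ‖s‖) * (K ^ 2 * ‖s‖ ^ 2) := mul_le_mul hKs hNu2 (by positivity) (by positivity)
      _ = K ^ 3 * ‖s‖ ^ 3 := by ring
  have hA1 : ‖a‖ * ‖u‖ ^ 2 + M * ‖u‖ ^ 3 ≤ (‖a‖ + M) * (K ^ 2 * ‖s‖ ^ 2) := by
    linarith [e1, mul_le_mul_of_nonneg_left hNu2 haM.le]
  have hB1 : ‖s‖ + ‖g'‖ * ‖u‖ ≤ 3 * ‖s‖ := by linarith [h2]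
  have p1 : (‖a‖ * ‖u‖ ^ 2 + M * ‖u‖ ^ 3) * (‖s‖ + ‖g'‖ * ‖u‖)
      ≤ (‖a‖ + M) * (K ^ 2 * ‖s‖ ^ 2) * (3 * ‖s‖) :=
    mul_le_mul hA1 hB1 (by positivity) (by positivity)
  have p2 : ‖a‖ / ‖g'‖ ^ 3 * ((‖a‖ * ‖u‖ ^ 2 + M * ‖u‖ ^ 3) * (‖s‖ + ‖g'‖ * ‖u‖))
      ≤ ‖a‖ / ‖g'‖ ^ 3 * ((‖a‖ + M) * (K ^ 2 * ‖s‖ ^ 2) * (3 * ‖s‖)) :=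
    mul_le_mul_of_nonneg_left p1 (by positivity)
  have p3 : M * ‖u‖ ^ 3 / ‖g'‖ ≤ M * (K ^ 3 * ‖s‖ ^ 3) / ‖g'‖ := by gcongr
  have hs3 : (0:ℝ) ≤ ‖s‖ ^ 3 := by positivity
  refine hnorm.trans ?_
  calc ‖a‖ / ‖g'‖ ^ 3 * ((‖a‖ * ‖u‖ ^ 2 + M * ‖u‖ ^ 3) * (‖s‖ + ‖g'‖ * ‖u‖)) + M * ‖u‖ ^ 3 / ‖g'‖
      ≤ ‖a‖ / ‖g'‖ ^ 3 * ((‖a‖ + M) * (K ^ 2 * ‖s‖ ^ 2) * (3 * ‖s‖))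
        + M * (K ^ 3 * ‖s‖ ^ 3) / ‖g'‖ := add_le_add p2 p3
    _ = (‖a‖ / ‖g'‖ ^ 3 * ((‖a‖ + M) * K ^ 2 * 3) + M * K ^ 3 / ‖g'‖) * ‖s‖ ^ 3 := by ring
    _ ≤ (‖a‖ / ‖g'‖ ^ 3 * ((‖a‖ + M) * K ^ 2 * 3) + M * K ^ 3 / ‖g'‖ + 1) * ‖s‖ ^ 3 := by
        apply mul_le_mul_of_nonneg_right _ hs3
        linarith

set_option maxHeartbeats 1000000 in

/-- Second-order expansion of the double root `f̃` of `Q₀ z = x̃ (z+1) - t̃ z` in the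
time parameter `t̃`, around a double root `f` at time `t`. -/
theorem stmt_4 (f : ℂ) (hf : f ≠ -1) (Q₀ : ℂ → ℂ) (hQ₀ : AnalyticAt ℂ Q₀ f)
    (hQ'' : deriv (deriv Q₀) f ≠ 0) (x t : ℝ)
    (h1 : Q₀ f = (x : ℂ) * (f + 1) - (t : ℂ) * f)
    (h2 : deriv Q₀ f = (x : ℂ) - (t : ℂ)) :
    ∃ C > 0, ∃ δ > 0, ∀ (x' t' : ℝ) (f' : ℂ), ‖f' - f‖ ≤ δ →
      Q₀ f' = (x' : ℂ) * (f' + 1) - (t' : ℂ) * f' →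
      deriv Q₀ f' = (x' : ℂ) - (t' : ℂ) →
      ‖f' - f - ((t : ℂ) - (t' : ℂ)) / ((f + 1) * deriv (deriv Q₀) f)
          + (((t : ℂ) - (t' : ℂ)) ^ 2
              * (deriv (deriv Q₀) f + (f + 1) * deriv (deriv (deriv Q₀)) f))
            / (2 * (f + 1) ^ 3 * (deriv (deriv Q₀) f) ^ 3)‖
        ≤ C * |t' - t| ^ 3 := by
  have hf1 : f + 1 ≠ 0 := by
    intro h; apply hf; linear_combination h
  obtain ⟨r, hr, hQan⟩ := hQ₀.exists_ball_analyticOnNhd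
  have hQd := hQan.deriv
  have hQdd := hQd.deriv
  have hmem : f ∈ Metric.ball f r := Metric.mem_ball_self hr
  set G : ℂ → ℂ := fun z => Q₀ z - (z + 1) * deriv Q₀ z with hGdef
  have hGan : AnalyticAt ℂ G f :=
    (hQan f hmem).sub ((analyticAt_id.add analyticAt_const).mul (hQd f hmem))
  have hderivG : ∀ z ∈ Metric.ball f r,
      deriv G z = -((z + 1) * deriv (deriv Q₀) z) := by
    intro z hz
    have d1 : DifferentiableAt ℂ Q₀ z := (hQan z hz).differentiableAt
    have d2 : DifferentiableAt ℂ (deriv Q₀) z := (hQd z hz).differentiableAt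
    have d2' : DifferentiableAt ℂ (fun w : ℂ => w + 1) z :=
      differentiableAt_id.add_const 1
    have d3 : DifferentiableAt ℂ (fun w => (w + 1) * deriv Q₀ w) z := d2'.mul d2
    rw [hGdef, deriv_fun_sub d1 d3, deriv_fun_mul d2' d2]
    simp

  have gd : deriv G f = -((f + 1) * deriv (deriv Q₀) f) := hderivG f hmem
  have gdd : deriv (deriv G) f
      = -(deriv (deriv Q₀) f + (f + 1) * deriv (deriv (deriv Q₀)) f) := by
    have hev : deriv G =ᶠ[nhds f] fun z => -((z + 1) * deriv (deriv Q₀) z) := by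
      filter_upwards [Metric.ball_mem_nhds f hr] with z hz using hderivG z hz
    rw [hev.deriv_eq]
    have d4 : DifferentiableAt ℂ (deriv (deriv Q₀)) f := (hQdd f hmem).differentiableAt
    have d4' : DifferentiableAt ℂ (fun w : ℂ => w + 1) f :=
      differentiableAt_id.add_const 1
    rw [deriv.fun_neg, deriv_fun_mul d4' d4]
    simp

  have hGf : G f = (t : ℂ) := by
    show Q₀ f - (f + 1) * deriv Q₀ f = (t : ℂ)
    rw [h1, h2]; ring
  obtain ⟨M, hM, δ₁, hδ₁, hTay⟩ := taylor2 G f hGan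
  rw [gd, gdd] at hTay
  have hg : -((f + 1) * deriv (deriv Q₀) f) ≠ 0 :=
    neg_ne_zero.2 (mul_ne_zero hf1 hQ'')
  obtain ⟨C, hC, δ, hδ, hδle, hmain⟩ :=
    aux_est (-((f + 1) * deriv (deriv Q₀) f))
      (-(deriv (deriv Q₀) f + (f + 1) * deriv (deriv (deriv Q₀)) f)) hg M δ₁ hM hδ₁
  refine ⟨C, hC, δ, hδ, ?_⟩
  intro x' t' f' hf' heq1 heq2
  have hGf' : G f' = (t' : ℂ) := by
    show Q₀ f' - (f' + 1) * deriv Q₀ f' = (t' : ℂ)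
    rw [heq1, heq2]; ring
  have hfu : f + (f' - f) = f' := by ring
  have hTu := hTay (f' - f) (hf'.trans hδle)
  rw [hfu, hGf', hGf] at hTu
  have hkey := hmain ((t' : ℂ) - (t : ℂ)) (f' - f) hf' hTu
  have hgoal : f' - f - ((t : ℂ) - (t' : ℂ)) / ((f + 1) * deriv (deriv Q₀) f)
      + (((t : ℂ) - (t' : ℂ)) ^ 2
          * (deriv (deriv Q₀) f + (f + 1) * deriv (deriv (deriv Q₀)) f))
        / (2 * (f + 1) ^ 3 * (deriv (deriv Q₀) f) ^ 3)
      = (f' - f) - ((t' : ℂ) - (t : ℂ)) / (-((f + 1) * deriv (deriv Q₀) f))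
        + ((t' : ℂ) - (t : ℂ)) ^ 2
            * (-(deriv (deriv Q₀) f + (f + 1) * deriv (deriv (deriv Q₀)) f))
          / (2 * (-((f + 1) * deriv (deriv Q₀) f)) ^ 3) := by
    have hden : (2 * (-((f + 1) * deriv (deriv Q₀) f)) ^ 3 : ℂ)
        = -(2 * (f + 1) ^ 3 * (deriv (deriv Q₀) f) ^ 3) := by ring
    rw [hden]
    simp only [div_neg, neg_div, neg_neg, sub_neg_eq_add, neg_mul, mul_neg]
    ring
  rw [hgoal]
  refine hkey.trans ?_
  have hns : ‖(t' : ℂ) - (t : ℂ)‖ = |t' - t| := by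
    rw [show (t' : ℂ) - (t : ℂ) = ((t' - t : ℝ) : ℂ) by push_cast; ring,
      Complex.norm_real, Real.norm_eq_abs]
  rw [hns]
end

section
/- Let F₀ ∈ ℂ with F₀ ≠ −1, let Q : ℂ → ℂ be analytic in a neighborhood of F₀ with Q''(F₀) ≠ 0, and let x, t ∈ ℝ satisfy Q(F₀) = x·(F₀+1) − t·F₀. Then there exist δ > 0 and C > 0 such that for every α ∈ ℝ with |α − 1| ≤ δ and every F' ∈ ℂ with α⁻¹F' ≠ −1 and |α⁻¹F' − F₀| ≤ δ satisfying ((F'+1)/(α⁻¹F'+1))·Q(α⁻¹F') = x·(F'+1) − t·F', one has |α⁻¹F' − F₀| ≤ C·|α − 1|^{1/2}. -/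
/-!
Write `u = α⁻¹ F'`. Multiplying the deformed equation by `u + 1` shows that
`G u := Q u - x (u + 1) + t u` equals `(α - 1) R u` for a function `R` continuous at `F₀`,
so `‖G u‖ = O(|α - 1|)`. Since `G'' = Q'' ≠ 0` at `F₀`, the analytic function `G` vanishes
to order at most two there, whence `‖G u‖ ≥ c ‖u - F₀‖²` near `F₀`. Comparing the two bounds
gives `‖u - F₀‖ = O(|α - 1|^{1/2})`.
-/

open Filter Topology

section AnalyticOrder

variable {𝕜 E : Type*} [NontriviallyNormedField 𝕜] [NormedAddCommGroup E] [NormedSpace 𝕜 E]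
  {f : 𝕜 → E} {z₀ : 𝕜} {n : ℕ}

lemma analyticOrderAt_le_of_iteratedDeriv_ne_zero [CharZero 𝕜] [CompleteSpace E]
    (hn : iteratedDeriv n f z₀ ≠ 0) : analyticOrderAt f z₀ ≤ n := by
  by_cases hf : AnalyticAt 𝕜 f z₀
  · by_contra! h
    exact hn ((natCast_le_analyticOrderAt_iff_iteratedDeriv_eq_zero hf).1
      (Order.add_one_le_of_lt h) n n.lt_succ_self)
  · simp [analyticOrderAt_of_not_analyticAt hf]

lemma AnalyticAt.exists_pos_eventually_mul_norm_sub_pow_le_norm (hf : AnalyticAt 𝕜 f z₀)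
    (hn : analyticOrderAt f z₀ ≤ n) :
    ∃ c > 0, ∀ᶠ z in 𝓝 z₀, c * ‖z - z₀‖ ^ n ≤ ‖f z‖ := by
  obtain ⟨m, hm⟩ := ENat.ne_top_iff_exists.1 (ne_top_of_le_ne_top (ENat.natCast_ne_top n) hn)
  obtain ⟨g, hg, hg₀, hfg⟩ := hf.analyticOrderAt_eq_natCast.1 hm.symm
  have hmn : m ≤ n := by exact_mod_cast hm ▸ hn
  have hg_near : ∀ᶠ z in 𝓝 z₀, ‖g z₀‖ / 2 < ‖g z‖ :=
    hg.continuousAt.norm.eventually (lt_mem_nhds (half_lt_self (norm_pos_iff.2 hg₀)))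
  refine ⟨‖g z₀‖ / 2, by positivity, ?_⟩
  filter_upwards [hfg, hg_near, Metric.closedBall_mem_nhds z₀ one_pos] with z hfz hgz hz
  calc ‖g z₀‖ / 2 * ‖z - z₀‖ ^ n ≤ ‖g z‖ * ‖z - z₀‖ ^ m :=
        mul_le_mul hgz.le (pow_le_pow_of_le_one (norm_nonneg _) (mem_closedBall_iff_norm.1 hz) hmn)
          (by positivity) (norm_nonneg _)
    _ = ‖f z‖ := by rw [hfz, norm_smul, norm_pow, mul_comm]

end AnalyticOrder

lemma iteratedDeriv_two_add_affine {𝕜 : Type*} [NontriviallyNormedField 𝕜] {f : 𝕜 → 𝕜} {z : 𝕜}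
    (hf : ContDiffAt 𝕜 2 f z) (a b : 𝕜) :
    iteratedDeriv 2 (fun u => f u + (a * u + b)) z = iteratedDeriv 2 f z := by
  rw [iteratedDeriv_fun_add hf (by fun_prop)]
  simp [iteratedDeriv_succ]

lemma add_affine_eq_sub_one_mul_of_deformed_eq {K : Type*} [Field K] {q u α x t : K}
    (hu : u + 1 ≠ 0) (h : (α * u + 1) / (u + 1) * q = x * (α * u + 1) - t * (α * u)) :
    q + ((t - x) * u + -x) = (α - 1) * (u * ((x - t) * (u + 1) - q) / (u + 1)) := by
  rw [div_mul_eq_mul_div, div_eq_iff hu] at h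
  field_simp
  linear_combination h

lemma le_sqrt_div_mul_sqrt_of_mul_sq_le {a c e M : ℝ} (ha : 0 ≤ a) (hc : 0 < c) (he : 0 ≤ e)
    (h : c * a ^ 2 ≤ e * M) : a ≤ √(M / c) * √e := by
  have hMe : 0 ≤ M * e := by nlinarith [sq_nonneg a]
  rw [← Real.sqrt_mul' _ he, div_mul_eq_mul_div, Real.le_sqrt ha (div_nonneg hMe hc.le),
    le_div_iff₀ hc]
  linarith

theorem stmt_6_general (F₀ : ℂ) (hF₀ : F₀ ≠ -1) (Q : ℂ → ℂ) (hQ : AnalyticAt ℂ Q F₀)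
    (hQ'' : deriv (deriv Q) F₀ ≠ 0) (x t : ℝ) :
    ∃ δ > 0, ∃ C > 0, ∀ α : ℝ, |α - 1| ≤ δ → ∀ F' : ℂ,
      ((α : ℂ))⁻¹ * F' ≠ -1 → ‖(α : ℂ)⁻¹ * F' - F₀‖ ≤ δ →
      ((F' + 1) / ((α : ℂ)⁻¹ * F' + 1)) * Q ((α : ℂ)⁻¹ * F')
        = (x : ℂ) * (F' + 1) - (t : ℂ) * F' →
      ‖(α : ℂ)⁻¹ * F' - F₀‖ ≤ C * Real.sqrt |α - 1| := by
  set G : ℂ → ℂ := fun u => Q u + ((t - x) * u + -x)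
  set R : ℂ → ℂ := fun u => u * ((x - t) * (u + 1) - Q u) / (u + 1)
  have hG'' : iteratedDeriv 2 G F₀ ≠ 0 := by
    rwa [iteratedDeriv_two_add_affine hQ.contDiffAt, iteratedDeriv_succ, iteratedDeriv_one]
  obtain ⟨c, hc, hG⟩ := (hQ.add (by fun_prop)).exists_pos_eventually_mul_norm_sub_pow_le_norm
    (analyticOrderAt_le_of_iteratedDeriv_ne_zero hG'')
  have hR : ∀ᶠ u in 𝓝 F₀, ‖R u‖ ≤ ‖R F₀‖ + 1 := by
    have hRc : ContinuousAt R F₀ := by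
      refine ContinuousAt.div (by fun_prop) (by fun_prop) ?_
      exact fun h => hF₀ (eq_neg_of_add_eq_zero_left h)
    exact hRc.norm.eventually (ge_mem_nhds (lt_add_one _))
  obtain ⟨δ, hδ, hball⟩ := Metric.nhds_basis_closedBall.eventually_iff.1 (hG.and hR)
  refine ⟨min δ (1 / 2), by positivity, √((‖R F₀‖ + 1) / c), by positivity,
    fun α hα F' hu hclose heq => ?_⟩
  set u := (α : ℂ)⁻¹ * F'
  have hα₀ : (α : ℂ) ≠ 0 := by
    have := (abs_le.1 (hα.trans (min_le_right _ _))).1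
    exact_mod_cast (show α ≠ 0 by linarith)
  have hF' : F' = α * u := (mul_inv_cancel_left₀ hα₀ F').symm
  obtain ⟨hGu, hRu⟩ := hball (mem_closedBall_iff_norm.2 (hclose.trans (min_le_left _ _)))
  have hGR : G u = (α - 1) * R u := add_affine_eq_sub_one_mul_of_deformed_eq
    (fun h => hu (eq_neg_of_add_eq_zero_left h)) (by rwa [hF'] at heq)
  refine le_sqrt_div_mul_sqrt_of_mul_sq_le (norm_nonneg _) hc (abs_nonneg _) ?_
  calc c * ‖u - F₀‖ ^ 2 ≤ ‖G u‖ := hGu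
    _ = |α - 1| * ‖R u‖ := by rw [hGR, norm_mul, ← Complex.ofReal_one, ← Complex.ofReal_sub,
        Complex.norm_real, Real.norm_eq_abs]
    _ ≤ |α - 1| * (‖R F₀‖ + 1) := by gcongr

/-- Any solution of the α-deformed equation that is moderately close to a solution `F₀`
of the undeformed equation (with `Q'' F₀ ≠ 0`) is within `C |α-1|^{1/2}` of it after
rescaling by `α⁻¹`. -/
theorem stmt_6 (F₀ : ℂ) (hF₀ : F₀ ≠ -1) (Q : ℂ → ℂ) (hQ : AnalyticAt ℂ Q F₀)
    (hQ'' : deriv (deriv Q) F₀ ≠ 0) (x t : ℝ)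
    (h : Q F₀ = (x : ℂ) * (F₀ + 1) - (t : ℂ) * F₀) :
    ∃ δ > 0, ∃ C > 0, ∀ α : ℝ, |α - 1| ≤ δ → ∀ F' : ℂ,
      ((α : ℂ))⁻¹ * F' ≠ -1 → ‖(α : ℂ)⁻¹ * F' - F₀‖ ≤ δ →
      ((F' + 1) / ((α : ℂ)⁻¹ * F' + 1)) * Q ((α : ℂ)⁻¹ * F')
        = (x : ℂ) * (F' + 1) - (t : ℂ) * F' →
      ‖(α : ℂ)⁻¹ * F' - F₀‖ ≤ C * Real.sqrt |α - 1| :=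
  stmt_6_general F₀ hF₀ Q hQ hQ'' x t
end

section
/- Let F₀, x₀, t ∈ ℝ with F₀ ≠ −1, and let Q : ℂ → ℂ be analytic in a neighborhood of F₀, real-valued on the real points of that neighborhood, with Q''(F₀) ≠ 0. Assume Q(F₀) = x₀·(F₀+1) − t·F₀ and Q'(F₀) = x₀ − t. For α ≠ 0 write Q_α(u) = ((u+1)/(α⁻¹u+1))·Q(α⁻¹u). Then there exist δ > 0 and C > 0 such that for every α ∈ ℝ with |α − 1| ≤ δ there exist real numbers F' and x' with |α⁻¹F' − F₀| ≤ C·|α − 1| such that Q_α(F') = x'·(F'+1) − t·F' and Q_α'(F') = x' − t, and moreover |x' − x₀ − t·(α − 1)·F₀/(F₀+1)²| ≤ C·|α − 1|². -/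
open Filter Topology

/-- Real derivative of a complex-analytic function that is real on the reals. -/
lemma aux_real_deriv (f : ℂ → ℂ) (x : ℝ) (hf : AnalyticAt ℂ f (x : ℂ))
    (h : ∀ᶠ y : ℝ in nhds x, (f (y : ℂ)).im = 0) :
    (∀ᶠ y : ℝ in nhds x,
      deriv f (y : ℂ) = ((deriv (fun s : ℝ => (f (s : ℂ)).re) y : ℝ) : ℂ)) ∧
    (∀ᶠ y : ℝ in nhds x, (deriv f (y : ℂ)).im = 0) := by
  have hcont : Filter.Tendsto (fun y : ℝ => (y : ℂ)) (nhds x) (nhds (x : ℂ)) :=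
    Complex.continuous_ofReal.continuousAt
  have hev : ∀ᶠ y : ℝ in nhds x, AnalyticAt ℂ f (y : ℂ) :=
    hcont.eventually hf.eventually_analyticAt
  have h2 : ∀ᶠ y : ℝ in nhds x, ∀ᶠ s : ℝ in nhds y, (f (s : ℂ)).im = 0 :=
    h.eventually_nhds
  have key : ∀ᶠ y : ℝ in nhds x,
      deriv f (y : ℂ) = ((deriv (fun s : ℝ => (f (s : ℂ)).re) y : ℝ) : ℂ) := by
    filter_upwards [hev, h2] with y hy hsy
    set d := deriv f (y : ℂ) with hd
    have hD : HasDerivAt f d (y : ℂ) := hy.differentiableAt.hasDerivAt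
    have hR : HasDerivAt (fun s : ℝ => f (s : ℂ)) d y := hD.comp_ofReal
    have hg : HasDerivAt (fun s : ℝ => (f (s : ℂ)).re) d.re y := hD.real_of_complex
    have hgC : HasDerivAt (fun s : ℝ => (((f (s : ℂ)).re : ℝ) : ℂ)) (d.re : ℂ) y :=
      hg.ofReal_comp
    have hEq : (fun s : ℝ => (((f (s : ℂ)).re : ℝ) : ℂ)) =ᶠ[nhds y]
        fun s : ℝ => f (s : ℂ) := by
      filter_upwards [hsy] with s hs
      exact (Complex.ext (by simp) (by simp [hs])).symm
    have hR' : HasDerivAt (fun s : ℝ => f (s : ℂ)) (d.re : ℂ) y :=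
      hgC.congr_of_eventuallyEq hEq.symm
    have : d = (d.re : ℂ) := hR.unique hR'
    rw [this, hg.deriv]
  refine ⟨key, ?_⟩
  filter_upwards [key] with y hy
  rw [hy]; simp

lemma aux_slice2 {f : ℝ × ℝ → ℝ} {a b : ℝ} (hf : DifferentiableAt ℝ f (a, b)) :
    HasDerivAt (fun u => f (a, u)) (fderiv ℝ f (a, b) (0, 1)) b := by
  have h1 : HasDerivAt (fun u : ℝ => ((a, u) : ℝ × ℝ)) ((0 : ℝ), (1 : ℝ)) b :=
    HasDerivAt.prodMk (hasDerivAt_const b a) (hasDerivAt_id b)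
  exact hf.hasFDerivAt.comp_hasDerivAt b h1

lemma aux_slice1 {f : ℝ × ℝ → ℝ} {a b : ℝ} (hf : DifferentiableAt ℝ f (a, b)) :
    HasDerivAt (fun s => f (s, b)) (fderiv ℝ f (a, b) (1, 0)) a := by
  have h1 : HasDerivAt (fun s : ℝ => ((s, b) : ℝ × ℝ)) ((1 : ℝ), (0 : ℝ)) a :=
    HasDerivAt.prodMk (hasDerivAt_id a) (hasDerivAt_const a b)
  exact hf.hasFDerivAt.comp_hasDerivAt a h1

/-- Quadratic bound for a C² function vanishing to second order. -/
lemma aux_quad (f : ℝ × ℝ → ℝ) (p₀ : ℝ × ℝ) (hf : ContDiffAt ℝ 2 f p₀)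
    (h0 : f p₀ = 0) (h1 : fderiv ℝ f p₀ = 0) :
    ∃ K > 0, ∀ᶠ p in nhds p₀, |f p| ≤ K * ‖p - p₀‖ ^ 2 := by
  have hf' : ContDiffAt ℝ 1 (fderiv ℝ f) p₀ := hf.fderiv_right (by norm_num)
  have hd : DifferentiableAt ℝ (fderiv ℝ f) p₀ := hf'.differentiableAt one_ne_zero
  set D2 := fderiv ℝ (fderiv ℝ f) p₀ with hD2
  set M : ℝ := ‖D2‖ + 1 with hM
  have hM0 : 0 < M := by positivity
  -- eventually ‖fderiv f p‖ ≤ M ‖p - p₀‖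
  have hlin : ∀ᶠ p in nhds p₀, ‖fderiv ℝ f p‖ ≤ M * ‖p - p₀‖ := by
    have := (hasFDerivAt_iff_isLittleO_nhds_zero.mp hd.hasFDerivAt)
    have h2 := hd.hasFDerivAt.isLittleO.def (by norm_num : (0:ℝ) < 1)
    filter_upwards [h2] with p hp
    have : ‖fderiv ℝ f p - fderiv ℝ f p₀ - D2 (p - p₀)‖ ≤ 1 * ‖p - p₀‖ := hp
    rw [h1, sub_zero] at this
    calc ‖fderiv ℝ f p‖ ≤ ‖fderiv ℝ f p - D2 (p - p₀)‖ + ‖D2 (p - p₀)‖ := by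
          simpa using norm_add_le (fderiv ℝ f p - D2 (p - p₀)) (D2 (p - p₀))
      _ ≤ 1 * ‖p - p₀‖ + ‖D2‖ * ‖p - p₀‖ := add_le_add this (D2.le_opNorm _)
      _ ≤ M * ‖p - p₀‖ := by rw [hM]; ring_nf; nlinarith [norm_nonneg (p - p₀), norm_nonneg D2]
  have hdiff : ∀ᶠ p in nhds p₀, DifferentiableAt ℝ f p := by
    filter_upwards [hf.eventually (by norm_num)] with p hp
    exact hp.differentiableAt (by norm_num)
  obtain ⟨ε, hε0, hε⟩ := Metric.eventually_nhds_iff.mp (hdiff.and hlin)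
  refine ⟨M, hM0, ?_⟩
  rw [Metric.eventually_nhds_iff]
  refine ⟨ε, hε0, fun p hp => ?_⟩
  have hball : ∀ q ∈ Metric.closedBall p₀ (dist p p₀), dist q p₀ < ε := by
    intro q hq
    rw [Metric.mem_closedBall] at hq
    exact lt_of_le_of_lt hq (by simpa [dist_comm] using hp)
  have key := Convex.norm_image_sub_le_of_norm_fderiv_le
    (f := f) (C := M * ‖p - p₀‖) (s := Metric.closedBall p₀ (dist p p₀))
    (fun q hq => (hε (hball q hq)).1)
    (fun q hq => by
      calc ‖fderiv ℝ f q‖ ≤ M * ‖q - p₀‖ := (hε (hball q hq)).2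
        _ ≤ M * ‖p - p₀‖ := by
            apply mul_le_mul_of_nonneg_left _ (le_of_lt hM0)
            rw [← dist_eq_norm, ← dist_eq_norm]
            exact Metric.mem_closedBall.mp hq)
    (convex_closedBall _ _)
    (Metric.mem_closedBall_self dist_nonneg)
    (by rw [Metric.mem_closedBall])
  have : ‖f p - f p₀‖ ≤ M * ‖p - p₀‖ * ‖p - p₀‖ := key
  rw [h0, sub_zero] at this
  calc |f p| = ‖f p‖ := rfl
    _ ≤ M * ‖p - p₀‖ * ‖p - p₀‖ := this
    _ = M * ‖p - p₀‖ ^ 2 := by ring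

set_option maxHeartbeats 4000000

/-- Persistence of the double root under the α-deformation (analytic form of Lemma 7.3):
the double-root point persists and its location moves horizontally by
`t (α-1) F₀ / (F₀+1)²` to first order in `α - 1`. -/
theorem stmt_9 (F₀ x₀ t : ℝ) (hF₀ : F₀ ≠ -1) (Q : ℂ → ℂ)
    (hQ : AnalyticAt ℂ Q (F₀ : ℂ))
    (hreal : ∀ᶠ y : ℝ in nhds F₀, (Q (y : ℂ)).im = 0)
    (hQ'' : deriv (deriv Q) (F₀ : ℂ) ≠ 0)
    (h1 : Q (F₀ : ℂ) = (x₀ : ℂ) * ((F₀ : ℂ) + 1) - (t : ℂ) * (F₀ : ℂ))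
    (h2 : deriv Q (F₀ : ℂ) = (x₀ : ℂ) - (t : ℂ)) :
    ∃ δ > 0, ∃ C > 0, ∀ α : ℝ, |α - 1| ≤ δ →
      ∃ F' x' : ℝ,
        ‖((α : ℂ))⁻¹ * (F' : ℂ) - (F₀ : ℂ)‖ ≤ C * |α - 1| ∧
        (((F' : ℂ) + 1) / ((α : ℂ)⁻¹ * (F' : ℂ) + 1)) * Q ((α : ℂ)⁻¹ * (F' : ℂ))
          = (x' : ℂ) * ((F' : ℂ) + 1) - (t : ℂ) * (F' : ℂ) ∧
        deriv (fun z : ℂ => ((z + 1) / ((α : ℂ)⁻¹ * z + 1)) * Q ((α : ℂ)⁻¹ * z)) (F' : ℂ)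
          = (x' : ℂ) - (t : ℂ) ∧
        |x' - x₀ - t * (α - 1) * F₀ / (F₀ + 1) ^ 2| ≤ C * |α - 1| ^ 2 := by
  have hF1 : F₀ + 1 ≠ 0 := fun h => hF₀ (by linarith)
  set q : ℝ → ℝ := fun y => (Q (y : ℂ)).re with hqdef
  -- q is real-analytic
  have hofR : AnalyticAt ℝ (fun y : ℝ => (y : ℂ)) F₀ := Complex.ofRealCLM.analyticAt F₀
  have hQr : AnalyticAt ℝ Q ((F₀ : ℝ) : ℂ) := hQ.restrictScalars
  have hqa : AnalyticAt ℝ q F₀ :=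
    (Complex.reCLM.analyticAt _).comp (hQr.comp hofR)
  have hq1a : AnalyticAt ℝ (deriv q) F₀ := by
    have h' : AnalyticAt ℝ (fderiv ℝ q) F₀ := hqa.fderiv
    have : deriv q = fun y => fderiv ℝ q y 1 := funext fun y => rfl
    rw [this]
    exact ((ContinuousLinearMap.apply ℝ ℝ (1 : ℝ)).analyticAt (fderiv ℝ q F₀)).comp h'
  set q1 : ℝ → ℝ := deriv q with hq1def
  set q2 : ℝ → ℝ := deriv q1 with hq2def
  obtain ⟨hA1, hA2⟩ := aux_real_deriv Q F₀ hQ hreal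
  have hQ'a : AnalyticAt ℂ (deriv Q) ((F₀ : ℝ) : ℂ) := by
    have h' : AnalyticAt ℂ (fderiv ℂ Q) ((F₀:ℝ):ℂ) := hQ.fderiv
    have : deriv Q = fun z => fderiv ℂ Q z 1 := funext fun z => rfl
    rw [this]
    exact ((ContinuousLinearMap.apply ℂ ℂ (1 : ℂ)).analyticAt _).comp h'
  obtain ⟨hB1, _⟩ := aux_real_deriv (deriv Q) F₀ hQ'a hA2
  -- identify second derivative
  have hq1ev : (fun s : ℝ => (deriv Q (s : ℂ)).re) =ᶠ[nhds F₀] q1 := by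
    filter_upwards [hA1] with y hy
    rw [hy]; simp; rfl
  have hQ''eq : deriv (deriv Q) ((F₀ : ℝ) : ℂ) = ((q2 F₀ : ℝ) : ℂ) := by
    have := hB1.self_of_nhds
    rw [this, hq1ev.deriv_eq]
  have hq2ne : q2 F₀ ≠ 0 := by
    intro h
    apply hQ''
    rw [hQ''eq, h, Complex.ofReal_zero]
  -- values
  have hq0 : q F₀ = x₀ * (F₀ + 1) - t * F₀ := by
    have h1' : Q ((F₀:ℝ):ℂ) = ((x₀ * (F₀ + 1) - t * F₀ : ℝ) : ℂ) := by
      rw [h1]; push_cast; ring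
    simp [hqdef, h1']
  have hq1v : q1 F₀ = x₀ - t := by
    have := hA1.self_of_nhds
    rw [h2] at this
    have : ((x₀ - t : ℝ) : ℂ) = ((q1 F₀ : ℝ) : ℂ) := by rw [← this]; push_cast; ring
    exact_mod_cast this.symm
  -- eventual facts in a single real radius
  have hQQ : ∀ᶠ y : ℝ in nhds F₀, Q (y : ℂ) = ((q y : ℝ) : ℂ) := by
    filter_upwards [hreal] with y hy
    exact Complex.ext (by simp [hqdef]) (by simp [hy])
  have hQd : ∀ᶠ y : ℝ in nhds F₀, DifferentiableAt ℂ Q (y : ℂ) := by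
    have := hQ.eventually_analyticAt
    have hcont : Filter.Tendsto (fun y : ℝ => (y : ℂ)) (nhds F₀) (nhds ((F₀:ℝ) : ℂ)) :=
      Complex.continuous_ofReal.continuousAt
    filter_upwards [hcont.eventually this] with y hy
    exact hy.differentiableAt
  obtain ⟨r₀, hr₀, hr⟩ := Metric.eventually_nhds_iff.mp ((hQQ.and hA1).and hQd)
  -- the implicit equation
  set E : ℝ × ℝ → ℝ := fun p =>
    ((p.1 - 1) * (p.1 * p.2 + 1) - p.1 * (p.2 + 1) * (p.1 * p.2 + 1)) * q p.2
      + (p.2 + 1) * (p.1 * p.2 + 1) ^ 2 * q1 p.2 + p.1 * t * (p.2 + 1) ^ 2 with hEdef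
  have hqs : ContDiffAt ℝ 2 (fun p : ℝ × ℝ => q p.2) (1, F₀) :=
    hqa.contDiffAt.comp (g := q) (f := Prod.snd) (1, F₀) contDiffAt_snd
  have hq1s : ContDiffAt ℝ 2 (fun p : ℝ × ℝ => q1 p.2) (1, F₀) :=
    hq1a.contDiffAt.comp (g := q1) (f := Prod.snd) (1, F₀) contDiffAt_snd
  have hpoly1 : ContDiffAt ℝ 2 (fun p : ℝ × ℝ =>
      (p.1 - 1) * (p.1 * p.2 + 1) - p.1 * (p.2 + 1) * (p.1 * p.2 + 1)) (1, F₀) := by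
    fun_prop
  have hpoly2 : ContDiffAt ℝ 2 (fun p : ℝ × ℝ => (p.2 + 1) * (p.1 * p.2 + 1) ^ 2) (1, F₀) := by
    fun_prop
  have hpoly3 : ContDiffAt ℝ 2 (fun p : ℝ × ℝ => p.1 * t * (p.2 + 1) ^ 2) (1, F₀) := by
    fun_prop
  have hEc : ContDiffAt ℝ 2 E (1, F₀) :=
    ((hpoly1.mul hqs).add (hpoly2.mul hq1s)).add hpoly3
  have hE0 : E (1, F₀) = 0 := by
    have : E (1, F₀) = ((1 - 1) * (1 * F₀ + 1) - 1 * (F₀ + 1) * (1 * F₀ + 1)) * q F₀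
        + (F₀ + 1) * (1 * F₀ + 1) ^ 2 * q1 F₀ + 1 * t * (F₀ + 1) ^ 2 := rfl
    rw [this, hq0, hq1v]; ring
  set DE := fderiv ℝ E (1, F₀) with hDEdef
  have hEst : HasStrictFDerivAt E DE (1, F₀) := hEc.hasStrictFDerivAt (by norm_num)
  have hEdiff : DifferentiableAt ℝ E (1, F₀) := hEc.differentiableAt (by norm_num)
  -- compute the partial derivative in u at (1, F₀)
  have hqd : HasDerivAt q (q1 F₀) F₀ := hqa.differentiableAt.hasDerivAt
  have hq1d : HasDerivAt q1 (q2 F₀) F₀ := hq1a.differentiableAt.hasDerivAt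
  have h_u1 : HasDerivAt (fun u : ℝ => u + 1) 1 F₀ := (hasDerivAt_id F₀).add_const 1
  have hp2 : HasDerivAt (fun u : ℝ => (u + 1) ^ 2) (2 * (F₀ + 1)) F₀ := by
    simpa using h_u1.fun_pow 2
  have hp3 : HasDerivAt (fun u : ℝ => (u + 1) ^ 3) (3 * (F₀ + 1) ^ 2) F₀ := by
    simpa using h_u1.fun_pow 3
  have hslice : HasDerivAt (fun u => E (1, u)) (DE (0, 1)) F₀ := aux_slice2 hEdiff
  have hsliceform : (fun u => E (1, u)) = fun u =>
      -((u + 1) ^ 2 * q u) + (u + 1) ^ 3 * q1 u + t * (u + 1) ^ 2 := by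
    funext u
    show ((1 - 1) * (1 * u + 1) - 1 * (u + 1) * (1 * u + 1)) * q u
        + (u + 1) * (1 * u + 1) ^ 2 * q1 u + 1 * t * (u + 1) ^ 2 = _
    ring
  have hslice2 : HasDerivAt (fun u => E (1, u))
      (-(2 * (F₀ + 1) * q F₀ + (F₀ + 1) ^ 2 * q1 F₀)
        + (3 * (F₀ + 1) ^ 2 * q1 F₀ + (F₀ + 1) ^ 3 * q2 F₀) + t * (2 * (F₀ + 1))) F₀ := by
    rw [hsliceform]
    exact ((hp2.mul hqd).neg.add (hp3.mul hq1d)).add ((hp2.const_mul t))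
  have hDE01 : DE (0, 1) = (F₀ + 1) ^ 3 * q2 F₀ := by
    rw [hslice.unique hslice2, hq0, hq1v]; ring
  have hd_ne : DE (0, 1) ≠ 0 := by
    rw [hDE01]
    exact mul_ne_zero (pow_ne_zero 3 hF1) hq2ne
  -- linearity decomposition
  have hDEv : ∀ v : ℝ × ℝ, DE v = v.1 * DE (1, 0) + v.2 * DE (0, 1) := by
    intro v
    have hv : v = v.1 • ((1 : ℝ), (0 : ℝ)) + v.2 • ((0 : ℝ), (1 : ℝ)) := by
      ext <;> simp
    rw [hv, map_add, map_smul, map_smul]; simp [smul_eq_mul]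
  -- the map G and its invertible derivative
  set G : ℝ × ℝ → ℝ × ℝ := fun p => (p.1, E p) with hGdef
  set B : ℝ × ℝ →L[ℝ] ℝ × ℝ := (ContinuousLinearMap.fst ℝ ℝ ℝ).prod DE with hBdef
  have hBv : ∀ v : ℝ × ℝ, B v = (v.1, DE v) := fun v => rfl
  have hbij : Function.Bijective B := by
    constructor
    · intro v w h
      have h' : (v.1, DE v) = (w.1, DE w) := by rw [← hBv, ← hBv]; exact h
      rw [Prod.ext_iff] at h'
      obtain ⟨e1, e2⟩ := h'
      simp only at e1 e2
      rw [hDEv v, hDEv w, e1] at e2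
      have e3 : v.2 = w.2 :=
        mul_right_cancel₀ hd_ne (by linarith : v.2 * DE (0,1) = w.2 * DE (0,1))
      exact Prod.ext e1 e3
    · intro y
      refine ⟨(y.1, (y.2 - y.1 * DE (1, 0)) / DE (0, 1)), ?_⟩
      rw [hBv]
      apply Prod.ext
      · rfl
      · show DE (y.1, (y.2 - y.1 * DE (1, 0)) / DE (0, 1)) = y.2
        rw [hDEv]
        show y.1 * DE (1, 0) + (y.2 - y.1 * DE (1, 0)) / DE (0, 1) * DE (0, 1) = y.2
        field_simp
        ring
  set A : (ℝ × ℝ) ≃L[ℝ] ℝ × ℝ :=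
    (LinearEquiv.ofBijective B.toLinearMap hbij).toContinuousLinearEquiv with hAdef
  have hAB : (A : (ℝ × ℝ) →L[ℝ] ℝ × ℝ) = B := by
    apply ContinuousLinearMap.ext
    intro v
    rfl
  have hG : HasStrictFDerivAt G (A : (ℝ × ℝ) →L[ℝ] ℝ × ℝ) (1, F₀) := by
    rw [hAB, hBdef]
    exact HasStrictFDerivAt.prodMk hasStrictFDerivAt_fst hEst
  set g := hG.localInverse G A (1, F₀) with hgdef
  have hGval : G (1, F₀) = ((1 : ℝ), (0 : ℝ)) := by
    rw [hGdef]; simp [hE0]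
  have hright : ∀ᶠ y in nhds ((1 : ℝ), (0 : ℝ)), G (g y) = y := by
    have := hG.eventually_right_inverse
    rwa [hGval] at this
  have hgval : g (1, 0) = (1, F₀) := by
    have := hG.localInverse_apply_image
    rwa [hGval] at this
  have hgder : HasStrictFDerivAt g (A.symm : (ℝ × ℝ) →L[ℝ] ℝ × ℝ) ((1 : ℝ), (0 : ℝ)) := by
    have := hG.to_localInverse
    rwa [hGval] at this
  set M : ℝ := ‖(A.symm : (ℝ × ℝ) →L[ℝ] ℝ × ℝ)‖ + 1 with hMdef
  have hM0 : 0 < M := by positivity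
  have hglip : ∀ᶠ y in nhds ((1 : ℝ), (0 : ℝ)), ‖g y - (1, F₀)‖ ≤ M * ‖y - (1, 0)‖ := by
    have hlo := (hgder.hasFDerivAt.isLittleO).def (by norm_num : (0:ℝ) < 1)
    filter_upwards [hlo] with y hy
    rw [hgval] at hy
    calc ‖g y - (1, F₀)‖
        = ‖(g y - (1, F₀) - (A.symm : (ℝ × ℝ) →L[ℝ] ℝ × ℝ) (y - (1, 0)))
          + (A.symm : (ℝ × ℝ) →L[ℝ] ℝ × ℝ) (y - (1, 0))‖ := by rw [sub_add_cancel]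
      _ ≤ ‖g y - (1, F₀) - (A.symm : (ℝ × ℝ) →L[ℝ] ℝ × ℝ) (y - (1, 0))‖
          + ‖(A.symm : (ℝ × ℝ) →L[ℝ] ℝ × ℝ) (y - (1, 0))‖ := norm_add_le _ _
      _ ≤ 1 * ‖y - (1, 0)‖ + ‖(A.symm : (ℝ × ℝ) →L[ℝ] ℝ × ℝ)‖ * ‖y - (1, 0)‖ :=
          add_le_add hy (ContinuousLinearMap.le_opNorm _ _)
      _ = M * ‖y - (1, 0)‖ := by rw [hMdef]; ring
  obtain ⟨ε₁, hε₁0, hε₁⟩ := Metric.eventually_nhds_iff.mp (hright.and hglip)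
  -- the function for the second-order bound
  set c : ℝ := t * F₀ / (F₀ + 1) ^ 2 with hcdef
  set W : ℝ × ℝ → ℝ := fun p =>
    q p.2 / (p.2 + 1) + t * p.1 * p.2 / (p.1 * p.2 + 1) - x₀ - c * (p.1 - 1) with hWdef
  have hX1 : ContDiffAt ℝ 2 (fun p : ℝ × ℝ => q p.2 / (p.2 + 1)) (1, F₀) := by
    apply hqs.div (by fun_prop)
    simpa using hF1
  have hX2 : ContDiffAt ℝ 2 (fun p : ℝ × ℝ => t * p.1 * p.2 / (p.1 * p.2 + 1)) (1, F₀) := by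
    apply ContDiffAt.div (by fun_prop) (by fun_prop)
    simpa using hF1
  have hWc : ContDiffAt ℝ 2 W (1, F₀) := by
    apply ContDiffAt.sub
    apply ContDiffAt.sub (hX1.add hX2) contDiffAt_const
    fun_prop
  have hW0 : W (1, F₀) = 0 := by
    show q F₀ / (F₀ + 1) + t * 1 * F₀ / (1 * F₀ + 1) - x₀ - c * (1 - 1) = 0
    rw [hq0]
    field_simp
    ring
  have hWdiff : DifferentiableAt ℝ W (1, F₀) := hWc.differentiableAt (by norm_num)
  -- partial derivatives of W vanish
  have hWu : HasDerivAt (fun u => W (1, u)) 0 F₀ := by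
    have hform : (fun u => W (1, u)) = fun u =>
        q u / (u + 1) + t * u / (u + 1) - x₀ - c * (1 - 1) := by
      funext u
      show q u / (u + 1) + t * 1 * u / (1 * u + 1) - x₀ - c * (1 - 1) = _
      ring
    rw [hform]
    have hd1 : HasDerivAt (fun u => q u / (u + 1))
        ((q1 F₀ * (F₀ + 1) - q F₀ * 1) / (F₀ + 1) ^ 2) F₀ := hqd.div h_u1 hF1
    have hd2 : HasDerivAt (fun u : ℝ => t * u / (u + 1))
        ((t * (F₀ + 1) - t * F₀ * 1) / (F₀ + 1) ^ 2) F₀ :=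
      HasDerivAt.div (by simpa using (hasDerivAt_id F₀).const_mul t) h_u1 hF1
    have := ((hd1.add hd2).sub_const x₀).sub_const (c * (1 - 1))
    convert this using 1
    · rfl
    · rfl
    · rfl
    rw [hq0, hq1v]
    field_simp
    ring
  have hWa : HasDerivAt (fun s => W (s, F₀)) 0 1 := by
    have hform : (fun s => W (s, F₀)) = fun s =>
        q F₀ / (F₀ + 1) + t * s * F₀ / (s * F₀ + 1) - x₀ - c * (s - 1) := by
      funext s
      rfl
    rw [hform]
    have hd2 : HasDerivAt (fun s : ℝ => t * s * F₀ / (s * F₀ + 1))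
        ((t * F₀ * (1 * F₀ + 1) - t * 1 * F₀ * F₀) / (1 * F₀ + 1) ^ 2) 1 := by
      apply HasDerivAt.div
      · have : HasDerivAt (fun s : ℝ => t * s * F₀) (t * F₀) 1 := by
          have := ((hasDerivAt_id (1:ℝ)).const_mul t).mul_const F₀
          simpa using this
        simpa using this
      · have := ((hasDerivAt_id (1:ℝ)).mul_const F₀).add_const 1
        simpa using this
      · simpa using hF1
    have hd3 : HasDerivAt (fun s : ℝ => c * (s - 1)) c 1 := by
      simpa using ((hasDerivAt_id (1:ℝ)).sub_const 1).const_mul c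
    have := (((hasDerivAt_const (1:ℝ) (q F₀ / (F₀ + 1))).add hd2).sub_const x₀).sub hd3
    convert this using 1
    · rfl
    · rfl
    · rfl
    rw [hcdef]
    field_simp
    ring
  have hWfd : fderiv ℝ W (1, F₀) = 0 := by
    have e2 : fderiv ℝ W (1, F₀) (0, 1) = 0 := (aux_slice2 hWdiff).unique hWu
    have e1 : fderiv ℝ W (1, F₀) (1, 0) = 0 := (aux_slice1 hWdiff).unique hWa
    apply ContinuousLinearMap.ext
    intro v
    have hv : v = v.1 • ((1 : ℝ), (0 : ℝ)) + v.2 • ((0 : ℝ), (1 : ℝ)) := by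
      ext <;> simp
    rw [hv, map_add, map_smul, map_smul, e1, e2]
    simp
  obtain ⟨K, hK0, hKev⟩ := aux_quad W (1, F₀) hWc hW0 hWfd
  obtain ⟨r₁, hr₁0, hr₁⟩ := Metric.eventually_nhds_iff.mp hKev
  -- choice of constants
  set ε₀ : ℝ := |F₀ + 1| / 2 with hε₀def
  have hε₀ : 0 < ε₀ := by
    rw [hε₀def]
    have : |F₀ + 1| > 0 := abs_pos.mpr hF1
    linarith
  have habs : |F₀ + 1| = 2 * ε₀ := by rw [hε₀def]; ring
  set δ : ℝ := min (min (1/2) (ε₁/2))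
      (min (r₀ / (2 * (M + 1))) (min (ε₀ / (|F₀| + ε₀ + M + 1)) (r₁ / (2 * (M + 1))))) with hδdef
  have hδ0 : 0 < δ := by
    apply lt_min
    · apply lt_min <;> [norm_num; positivity]
    · apply lt_min
      · positivity
      · apply lt_min <;> positivity
  set C : ℝ := M + K * (M + 1) ^ 2 with hCdef
  have hC0 : 0 < C := by positivity
  have hCM : M ≤ C := le_add_of_nonneg_right (by positivity)
  refine ⟨δ, hδ0, C, hC0, fun α hα => ?_⟩
  -- basic consequences of |α - 1| ≤ δ
  have hδ1 : δ ≤ 1/2 := le_trans (min_le_left _ _) (min_le_left _ _)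
  have hδε₁ : δ < ε₁ := lt_of_le_of_lt (le_trans (min_le_left _ _) (min_le_right _ _))
    (by linarith)
  have hδr₀ : M * δ < r₀ := by
    have h' : δ ≤ r₀ / (2 * (M + 1)) := le_trans (min_le_right _ _) (min_le_left _ _)
    have : M * δ ≤ M * (r₀ / (2 * (M + 1))) := by
      apply mul_le_mul_of_nonneg_left h' (le_of_lt hM0)
    have h2' : M * (r₀ / (2 * (M + 1))) < r₀ := by
      rw [← mul_div_assoc, div_lt_iff₀ (by positivity : (0:ℝ) < 2 * (M + 1))]
      nlinarith
    exact lt_of_le_of_lt this h2'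
  have hδε₀ : δ * (|F₀| + ε₀) + M * δ ≤ ε₀ := by
    have h' : δ ≤ ε₀ / (|F₀| + ε₀ + M + 1) :=
      le_trans (min_le_right _ _) (le_trans (min_le_right _ _) (min_le_left _ _))
    have hD : (0:ℝ) < |F₀| + ε₀ + M + 1 := by positivity
    rw [le_div_iff₀ hD] at h'
    nlinarith [abs_nonneg F₀, le_of_lt hδ0]
  have hδr₁ : δ < r₁ ∧ M * δ < r₁ := by
    have h' : δ ≤ r₁ / (2 * (M + 1)) :=
      le_trans (min_le_right _ _) (le_trans (min_le_right _ _) (min_le_right _ _))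
    constructor
    · have : r₁ / (2 * (M + 1)) < r₁ := by
        rw [div_lt_iff₀ (by positivity)]
        nlinarith
      linarith
    · have : M * δ ≤ M * (r₁ / (2 * (M + 1))) :=
        mul_le_mul_of_nonneg_left h' (le_of_lt hM0)
      have h2' : M * (r₁ / (2 * (M + 1))) < r₁ := by
        rw [← mul_div_assoc, div_lt_iff₀ (by positivity : (0:ℝ) < 2 * (M + 1))]
        nlinarith
      exact lt_of_le_of_lt this h2'
  have hα12 : |α - 1| ≤ 1/2 := le_trans hα hδ1
  have hαpos : 0 < α := by
    rcases abs_le.mp hα12 with ⟨h', _⟩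
    linarith
  have hαne : α ≠ 0 := ne_of_gt hαpos
  have hαCne : (α : ℂ) ≠ 0 := by exact_mod_cast hαne
  -- apply the local inverse
  have hy : dist ((α : ℝ), (0 : ℝ)) ((1 : ℝ), (0 : ℝ)) < ε₁ := by
    rw [Prod.dist_eq]
    simp only [dist_self]
    rw [Real.dist_eq]
    calc max (|α - 1|) 0 = |α - 1| := max_eq_left (abs_nonneg _)
      _ ≤ δ := hα
      _ < ε₁ := hδε₁
  obtain ⟨hGy, hlip⟩ := hε₁ hy
  set p : ℝ × ℝ := g (α, 0) with hpdef
  obtain ⟨hp1, hp2'⟩ := Prod.ext_iff.mp hGy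
  have hp1' : p.1 = α := hp1
  have hEp : E p = 0 := hp2'
  set u : ℝ := p.2 with hudef
  have hpu : p = (α, u) := by
    rw [← hp1']
  have hEαu : E (α, u) = 0 := by rw [← hpu]; exact hEp
  have hnorm_y : ‖((α : ℝ), (0 : ℝ)) - ((1 : ℝ), (0 : ℝ))‖ = |α - 1| := by
    have : ((α : ℝ), (0 : ℝ)) - ((1 : ℝ), (0 : ℝ)) = (α - 1, (0 : ℝ)) := by
      ext <;> simp
    rw [this, Prod.norm_def]
    simp [Real.norm_eq_abs]
  have hulip : |u - F₀| ≤ M * |α - 1| := by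
    have h' : ‖p - ((1 : ℝ), F₀)‖ ≤ M * ‖((α : ℝ), (0 : ℝ)) - ((1 : ℝ), (0 : ℝ))‖ := hlip
    rw [hnorm_y] at h'
    have h2' : |u - F₀| ≤ ‖p - ((1 : ℝ), F₀)‖ := by
      have := norm_snd_le (p - ((1 : ℝ), F₀))
      simpa [Real.norm_eq_abs] using this
    linarith
  have hMα : M * |α - 1| ≤ M * δ := mul_le_mul_of_nonneg_left hα (le_of_lt hM0)
  -- u is in the good radius
  have hur₀ : dist u F₀ < r₀ := by
    rw [Real.dist_eq]
    linarith
  have hQu : Q (u : ℂ) = ((q u : ℝ) : ℂ) := (hr hur₀).1.1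
  have hQ'u : deriv Q (u : ℂ) = ((q1 u : ℝ) : ℂ) := (hr hur₀).1.2
  have hQdu : DifferentiableAt ℂ Q (u : ℂ) := (hr hur₀).2
  -- nonvanishing of denominators
  have huF : |u - F₀| ≤ ε₀ := by
    have : M * δ ≤ ε₀ := by nlinarith [abs_nonneg F₀, le_of_lt hδ0, le_of_lt hε₀]
    linarith
  have hu1 : ε₀ ≤ |u + 1| := by
    have : u + 1 = (F₀ + 1) + (u - F₀) := by ring
    rw [this]
    calc ε₀ = 2 * ε₀ - ε₀ := by ring
      _ ≤ |F₀ + 1| - |u - F₀| := by rw [habs]; linarith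
      _ ≤ |F₀ + 1 + (u - F₀)| := by
          have h := abs_add_le (F₀ + 1 + (u - F₀)) (-(u - F₀))
          rw [abs_neg] at h
          simp only [add_neg_cancel_right] at h
          linarith
  have hu1ne : u + 1 ≠ 0 := by
    intro h
    rw [h] at hu1
    simp at hu1
    linarith
  have hαu1 : ε₀ ≤ |α * u + 1| := by
    have hαuF : |α * u - F₀| ≤ ε₀ := by
      have e : α * u - F₀ = (α - 1) * u + (u - F₀) := by ring
      have hub : |u| ≤ |F₀| + ε₀ := by
        have := abs_sub_abs_le_abs_sub u F₀
        linarith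
      have h1' : |(α - 1) * u| ≤ δ * (|F₀| + ε₀) := by
        rw [abs_mul]
        apply mul_le_mul hα hub (abs_nonneg _) (le_of_lt hδ0)
      have h2' : |u - F₀| ≤ M * δ := le_trans hulip hMα
      calc |α * u - F₀| = |(α - 1) * u + (u - F₀)| := by rw [e]
        _ ≤ |(α - 1) * u| + |u - F₀| := abs_add_le _ _
        _ ≤ δ * (|F₀| + ε₀) + M * δ := add_le_add h1' h2'
        _ ≤ ε₀ := hδε₀
    have e2 : α * u + 1 = (F₀ + 1) + (α * u - F₀) := by ring
    rw [e2]
    calc ε₀ = 2 * ε₀ - ε₀ := by ring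
      _ ≤ |F₀ + 1| - |α * u - F₀| := by rw [habs]; linarith
      _ ≤ |F₀ + 1 + (α * u - F₀)| := by
          have h := abs_add_le (F₀ + 1 + (α * u - F₀)) (-(α * u - F₀))
          rw [abs_neg] at h
          simp only [add_neg_cancel_right] at h
          linarith
  have hαu1ne : α * u + 1 ≠ 0 := by
    intro h
    rw [h] at hαu1
    simp at hαu1
    linarith
  -- cast versions
  have hu1C : ((u : ℝ) : ℂ) + 1 ≠ 0 := by
    intro h
    apply hu1ne
    exact_mod_cast h
  have hαu1C : (α : ℂ) * (u : ℂ) + 1 ≠ 0 := by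
    intro h
    apply hαu1ne
    exact_mod_cast h
  -- the witnesses
  have hinv : ((α : ℂ))⁻¹ * (((α * u : ℝ)) : ℂ) = ((u : ℝ) : ℂ) := by
    push_cast
    field_simp
  refine ⟨α * u, q u / (u + 1) + t * α * u / (α * u + 1), ?_, ?_, ?_, ?_⟩
  · rw [hinv, ← Complex.ofReal_sub, Complex.norm_real, Real.norm_eq_abs]
    calc |u - F₀| ≤ M * |α - 1| := hulip
      _ ≤ C * |α - 1| := mul_le_mul_of_nonneg_right hCM (abs_nonneg _)
  · rw [hinv, hQu]
    push_cast
    field_simp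
    ring
  · -- the derivative equation
    set z₀ : ℂ := ((α * u : ℝ) : ℂ) with hz₀
    have hβz0 : ((α : ℂ))⁻¹ * z₀ = ((u : ℝ) : ℂ) := hinv
    have hden : HasDerivAt (fun z : ℂ => ((α : ℂ))⁻¹ * z + 1) ((α : ℂ))⁻¹ z₀ := by
      simpa using ((hasDerivAt_id z₀).const_mul ((α : ℂ))⁻¹).add_const 1
    have hnum : HasDerivAt (fun z : ℂ => z + 1) 1 z₀ := (hasDerivAt_id z₀).add_const 1
    have hdenne : ((α : ℂ))⁻¹ * z₀ + 1 ≠ 0 := by rw [hβz0]; exact hu1C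
    have hfrac : HasDerivAt (fun z : ℂ => (z + 1) / (((α : ℂ))⁻¹ * z + 1))
        ((1 * (((α : ℂ))⁻¹ * z₀ + 1) - (z₀ + 1) * ((α : ℂ))⁻¹) / (((α : ℂ))⁻¹ * z₀ + 1) ^ 2)
        z₀ := hnum.div hden hdenne
    have hmul : HasDerivAt (fun z : ℂ => ((α : ℂ))⁻¹ * z) ((α : ℂ))⁻¹ z₀ := by
      simpa using (hasDerivAt_id z₀).const_mul ((α : ℂ))⁻¹
    have hQat : HasDerivAt Q (deriv Q ((u : ℝ) : ℂ)) (((α : ℂ))⁻¹ * z₀) := by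
      rw [hβz0]; exact hQdu.hasDerivAt
    have hQcomp : HasDerivAt (fun z : ℂ => Q (((α : ℂ))⁻¹ * z))
        (deriv Q ((u : ℝ) : ℂ) * ((α : ℂ))⁻¹) z₀ := hQat.comp z₀ hmul
    have hprod := hfrac.fun_mul hQcomp
    rw [hprod.deriv, hβz0, hQu, hQ'u]
    have hE' : ((α - 1) * (α * u + 1) - α * (u + 1) * (α * u + 1)) * q u
        + (u + 1) * (α * u + 1) ^ 2 * q1 u + α * t * (u + 1) ^ 2 = 0 := hEαu
    have hkeyR : (1 * (u + 1) - (α * u + 1) * α⁻¹) / (u + 1) ^ 2 * q u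
        + (α * u + 1) / (u + 1) * (q1 u * α⁻¹)
        = q u / (u + 1) + t * α * u / (α * u + 1) - t := by
      have hαu1ne' : u * α + 1 ≠ 0 := by rwa [mul_comm]
      field_simp
      linear_combination hE'
    rw [hz₀]
    exact_mod_cast hkeyR
  · -- the second-order bound
    have hWval : q u / (u + 1) + t * α * u / (α * u + 1) - x₀
        - t * (α - 1) * F₀ / (F₀ + 1) ^ 2 = W (α, u) := by
      show _ = q u / (u + 1) + t * α * u / (α * u + 1) - x₀ - c * (α - 1)
      rw [hcdef]; ring
    have hdist : dist ((α : ℝ), u) ((1 : ℝ), F₀) < r₁ := by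
      rw [Prod.dist_eq]
      apply max_lt
      · rw [Real.dist_eq]; exact lt_of_le_of_lt hα hδr₁.1
      · rw [Real.dist_eq]; exact lt_of_le_of_lt (le_trans hulip hMα) hδr₁.2
    have hWb := hr₁ hdist
    have hnorm : ‖((α : ℝ), u) - ((1 : ℝ), F₀)‖ ≤ (M + 1) * |α - 1| := by
      have he : ((α : ℝ), u) - ((1 : ℝ), F₀) = (α - 1, u - F₀) := by ext <;> simp
      rw [he, Prod.norm_def]
      have hM1 : (1 : ℝ) ≤ M + 1 := by linarith
      have hMM : M ≤ M + 1 := by linarith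
      apply max_le
      · rw [Real.norm_eq_abs]
        calc |α - 1| = 1 * |α - 1| := (one_mul _).symm
          _ ≤ (M + 1) * |α - 1| := mul_le_mul_of_nonneg_right hM1 (abs_nonneg _)
      · rw [Real.norm_eq_abs]
        exact le_trans hulip (mul_le_mul_of_nonneg_right hMM (abs_nonneg _))
    rw [hWval]
    calc |W (α, u)| ≤ K * ‖((α : ℝ), u) - ((1 : ℝ), F₀)‖ ^ 2 := hWb
      _ ≤ K * ((M + 1) * |α - 1|) ^ 2 := by
          apply mul_le_mul_of_nonneg_left _ (le_of_lt hK0)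
          apply pow_le_pow_left₀ (norm_nonneg _) hnorm
      _ = K * (M + 1) ^ 2 * |α - 1| ^ 2 := by ring
      _ ≤ C * |α - 1| ^ 2 := by
          apply mul_le_mul_of_nonneg_right _ (by positivity)
          exact le_add_of_nonneg_left (le_of_lt hM0)
end

section
/- Let R ⊆ ℤ² be finite and nonempty and let H, H' be height functions on R that agree on ∂R. Then there is a finite sequence H = H₀, H₁, …, H_m = H' of height functions on R, all agreeing with H on ∂R, such that for each j < m the function H_{j+1} is a unit increase or a unit decrease of H_j at some interior vertex of R. In particular, the single-site flip moves connect any two elements of G(h), i.e. the flip dynamics on G(h) is irreducible. -/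
open scoped Classical

/-- Adjacency in the triangular lattice `𝕋`. -/
def TriAdj (u v : ℤ × ℤ) : Prop :=
  v = (u.1 + 1, u.2) ∨ v = (u.1 - 1, u.2) ∨ v = (u.1, u.2 + 1) ∨
    v = (u.1, u.2 - 1) ∨ v = (u.1 + 1, u.2 + 1) ∨ v = (u.1 - 1, u.2 - 1)

/-- The boundary of `R`: vertices of `R` adjacent in `𝕋` to a vertex outside `R`. -/
noncomputable def bdry (R : Finset (ℤ × ℤ)) : Finset (ℤ × ℤ) :=
  R.filter fun v => ∃ u : ℤ × ℤ, u ∉ R ∧ TriAdj v u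

/-- The interior vertices of `R`. -/
noncomputable def interiorV (R : Finset (ℤ × ℤ)) : Finset (ℤ × ℤ) :=
  R \ bdry R

/-- `H` is a height function on `R`. -/
def IsHeightFn (R : Finset (ℤ × ℤ)) (H : ℤ × ℤ → ℤ) : Prop :=
  ∀ u ∈ R, ∀ v ∈ R,
    (v = (u.1 + 1, u.2) ∨ v = (u.1, u.2 - 1) ∨ v = (u.1 + 1, u.2 + 1)) →
      (H v - H u = 0 ∨ H v - H u = 1)

/-- The function obtained from `H` by changing its value at `v` by `ε`
(`ε = 1` is the unit increase at `v`, `ε = -1` the unit decrease). -/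
def bump (H : ℤ × ℤ → ℤ) (v : ℤ × ℤ) (ε : ℤ) : ℤ × ℤ → ℤ :=
  fun w => if w = v then H w + ε else H w

private def phi (w : ℤ × ℤ) : ℤ := 2 * w.1 - w.2

private lemma edge_irrefl {u w : ℤ × ℤ}
    (h : w = (u.1 + 1, u.2) ∨ w = (u.1, u.2 - 1) ∨ w = (u.1 + 1, u.2 + 1)) : w ≠ u := by
  rintro rfl
  rcases h with h|h|h <;> (rw [Prod.ext_iff] at h; simp at h) <;> omega

private lemma edge_phi {u w : ℤ × ℤ}
    (h : w = (u.1 + 1, u.2) ∨ w = (u.1, u.2 - 1) ∨ w = (u.1 + 1, u.2 + 1)) :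
    phi u < phi w := by
  rcases h with h|h|h <;> (rw [h]; simp [phi]) <;> omega

private lemma step_dec (R : Finset (ℤ × ℤ)) (H H' : ℤ × ℤ → ℤ)
    (hH : IsHeightFn R H) (hH' : IsHeightFn R H')
    (hbd : ∀ v ∈ bdry R, H v = H' v)
    (hex : ∃ w ∈ R, H' w < H w) :
    ∃ v ∈ interiorV R, H' v < H v ∧ IsHeightFn R (bump H v (-1)) := by
  classical
  set D := R.filter (fun w => H' w < H w) with hD
  have hDne : D.Nonempty := by
    obtain ⟨w, hw, hlt⟩ := hex
    exact ⟨w, Finset.mem_filter.mpr ⟨hw, hlt⟩⟩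
  obtain ⟨v₀, hv₀, hmax⟩ := D.exists_max_image H hDne
  set M := D.filter (fun u => H u = H v₀) with hM
  have hv₀M : v₀ ∈ M := Finset.mem_filter.mpr ⟨hv₀, rfl⟩
  obtain ⟨v, hvM, hmin⟩ := M.exists_min_image phi ⟨v₀, hv₀M⟩
  have hvD : v ∈ D := (Finset.mem_filter.mp hvM).1
  have hvH : H v = H v₀ := (Finset.mem_filter.mp hvM).2
  have hvR : v ∈ R := (Finset.mem_filter.mp hvD).1
  have hvlt : H' v < H v := (Finset.mem_filter.mp hvD).2
  have hmax' : ∀ u ∈ D, H u ≤ H v := fun u hu => hvH ▸ hmax u hu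
  refine ⟨v, ?_, hvlt, ?_⟩
  · refine Finset.mem_sdiff.mpr ⟨hvR, fun hb => ?_⟩
    exact absurd (hbd v hb) (by omega)
  · intro u hu w hw hedge
    have h1 := hH u hu w hw hedge
    have h2 := hH' u hu w hw hedge
    by_cases hwv : w = v <;> by_cases huv : u = v
    · exact absurd (hwv.trans huv.symm) (edge_irrefl hedge)
    · have e1 : bump H v (-1) w = H v + (-1) := by simp [bump, hwv]
      have e2 : bump H v (-1) u = H u := by simp [bump, huv]
      have hHv : H w = H v := by rw [hwv]
      have hH'v : H' w = H' v := by rw [hwv]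
      rw [e1, e2]
      rcases h1 with h1|h1
      · exfalso
        have huD : u ∈ D := Finset.mem_filter.mpr ⟨hu, by omega⟩
        have huM : u ∈ M := Finset.mem_filter.mpr ⟨huD, by omega⟩
        have hφ := hmin u huM
        have hφ' := edge_phi hedge
        rw [← hwv] at hφ
        omega
      · omega
    · have e1 : bump H v (-1) w = H w := by simp [bump, hwv]
      have e2 : bump H v (-1) u = H v + (-1) := by simp [bump, huv]
      have hHv : H u = H v := by rw [huv]
      have hH'v : H' u = H' v := by rw [huv]
      rw [e1, e2]
      rcases h1 with h1|h1
      · omega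
      · exfalso
        have hwD : w ∈ D := Finset.mem_filter.mpr ⟨hw, by omega⟩
        have := hmax' w hwD
        omega
    · have e1 : bump H v (-1) w = H w := by simp [bump, hwv]
      have e2 : bump H v (-1) u = H u := by simp [bump, huv]
      rw [e1, e2]
      omega

private lemma step_inc (R : Finset (ℤ × ℤ)) (H H' : ℤ × ℤ → ℤ)
    (hH : IsHeightFn R H) (hH' : IsHeightFn R H')
    (hbd : ∀ v ∈ bdry R, H v = H' v)
    (hex : ∃ w ∈ R, H w < H' w) :
    ∃ v ∈ interiorV R, H v < H' v ∧ IsHeightFn R (bump H v 1) := by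
  classical
  set D := R.filter (fun w => H w < H' w) with hD
  have hDne : D.Nonempty := by
    obtain ⟨w, hw, hlt⟩ := hex
    exact ⟨w, Finset.mem_filter.mpr ⟨hw, hlt⟩⟩
  obtain ⟨v₀, hv₀, hminH⟩ := D.exists_min_image H hDne
  set M := D.filter (fun u => H u = H v₀) with hM
  have hv₀M : v₀ ∈ M := Finset.mem_filter.mpr ⟨hv₀, rfl⟩
  obtain ⟨v, hvM, hmaxφ⟩ := M.exists_max_image phi ⟨v₀, hv₀M⟩
  have hvD : v ∈ D := (Finset.mem_filter.mp hvM).1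
  have hvH : H v = H v₀ := (Finset.mem_filter.mp hvM).2
  have hvR : v ∈ R := (Finset.mem_filter.mp hvD).1
  have hvlt : H v < H' v := (Finset.mem_filter.mp hvD).2
  have hmin' : ∀ u ∈ D, H v ≤ H u := fun u hu => hvH ▸ hminH u hu
  refine ⟨v, ?_, hvlt, ?_⟩
  · refine Finset.mem_sdiff.mpr ⟨hvR, fun hb => ?_⟩
    exact absurd (hbd v hb) (by omega)
  · intro u hu w hw hedge
    have h1 := hH u hu w hw hedge
    have h2 := hH' u hu w hw hedge
    by_cases hwv : w = v <;> by_cases huv : u = v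
    · exact absurd (hwv.trans huv.symm) (edge_irrefl hedge)
    · have e1 : bump H v 1 w = H v + 1 := by simp [bump, hwv]
      have e2 : bump H v 1 u = H u := by simp [bump, huv]
      have hHv : H w = H v := by rw [hwv]
      have hH'v : H' w = H' v := by rw [hwv]
      rw [e1, e2]
      rcases h1 with h1|h1
      · omega
      · exfalso
        have huD : u ∈ D := Finset.mem_filter.mpr ⟨hu, by omega⟩
        have := hmin' u huD
        omega
    · have e1 : bump H v 1 w = H w := by simp [bump, hwv]
      have e2 : bump H v 1 u = H v + 1 := by simp [bump, huv]
      have hHv : H u = H v := by rw [huv]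
      have hH'v : H' u = H' v := by rw [huv]
      rw [e1, e2]
      rcases h1 with h1|h1
      · exfalso
        have hwD : w ∈ D := Finset.mem_filter.mpr ⟨hw, by omega⟩
        have hwM : w ∈ M := Finset.mem_filter.mpr ⟨hwD, by omega⟩
        have hφ := hmaxφ w hwM
        have hφ' := edge_phi hedge
        rw [huv] at hφ'
        omega
      · omega
    · have e1 : bump H v 1 w = H w := by simp [bump, hwv]
      have e2 : bump H v 1 u = H u := by simp [bump, huv]
      rw [e1, e2]
      omega

private lemma main_lemma (R : Finset (ℤ × ℤ)) (H' : ℤ × ℤ → ℤ) (hH' : IsHeightFn R H') :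
    ∀ n : ℕ, ∀ H : ℤ × ℤ → ℤ, IsHeightFn R H → (∀ v ∈ bdry R, H v = H' v) →
      (∑ v ∈ R, (H v - H' v).natAbs) ≤ n →
      ∃ (m : ℕ) (f : ℕ → ℤ × ℤ → ℤ),
        f 0 = H ∧ (∀ v ∈ R, f m v = H' v) ∧
        (∀ j ≤ m, IsHeightFn R (f j) ∧ ∀ v ∈ bdry R, f j v = H' v) ∧
        (∀ j < m, ∃ v ∈ interiorV R,
          f (j + 1) = bump (f j) v 1 ∨ f (j + 1) = bump (f j) v (-1)) := by
  intro n
  induction n with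
  | zero =>
      intro H hH hbd hsum
      have hz : ∀ v ∈ R, H v = H' v := by
        intro v hv
        have h0 := Finset.sum_eq_zero_iff.mp (Nat.le_zero.mp hsum) v hv
        omega
      exact ⟨0, fun _ => H, rfl, hz, fun j _ => ⟨hH, hbd⟩, fun j hj => absurd hj (by omega)⟩
  | succ n ih =>
      intro H hH hbd hsum
      by_cases h0 : ∀ v ∈ R, H v = H' v
      · exact ⟨0, fun _ => H, rfl, h0, fun j _ => ⟨hH, hbd⟩, fun j hj => absurd hj (by omega)⟩
      push_neg at h0
      obtain ⟨w, hw, hne⟩ := h0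
      have hstep : ∃ v ∈ interiorV R, ∃ ε : ℤ, (ε = 1 ∨ ε = -1) ∧ IsHeightFn R (bump H v ε) ∧
          (bump H v ε v - H' v).natAbs + 1 = (H v - H' v).natAbs := by
        rcases lt_or_gt_of_ne hne with hlt | hgt
        · obtain ⟨v, hvI, hvlt, hhf⟩ := step_inc R H H' hH hH' hbd ⟨w, hw, hlt⟩
          refine ⟨v, hvI, 1, Or.inl rfl, hhf, ?_⟩
          have e1 : bump H v 1 v = H v + 1 := by simp [bump]
          rw [e1]; omega
        · obtain ⟨v, hvI, hvlt, hhf⟩ := step_dec R H H' hH hH' hbd ⟨w, hw, hgt⟩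
          refine ⟨v, hvI, -1, Or.inr rfl, hhf, ?_⟩
          have e1 : bump H v (-1) v = H v + (-1) := by simp [bump]
          rw [e1]; omega
      obtain ⟨v, hvI, ε, hε, hhf, hdec⟩ := hstep
      have hvR : v ∈ R := (Finset.mem_sdiff.mp hvI).1
      have hvnb : v ∉ bdry R := (Finset.mem_sdiff.mp hvI).2
      have hbd1 : ∀ u ∈ bdry R, bump H v ε u = H' u := by
        intro u hu
        have hne' : u ≠ v := fun h => hvnb (h ▸ hu)
        simp [bump, hne', hbd u hu]
      have hsum1 : (∑ u ∈ R, (bump H v ε u - H' u).natAbs) ≤ n := by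
        have e1 := Finset.add_sum_erase R (fun u => (bump H v ε u - H' u).natAbs) hvR
        have e2 := Finset.add_sum_erase R (fun u => (H u - H' u).natAbs) hvR
        have e3 : ∑ u ∈ R.erase v, (bump H v ε u - H' u).natAbs
            = ∑ u ∈ R.erase v, (H u - H' u).natAbs := by
          apply Finset.sum_congr rfl
          intro u hu
          have hne' : u ≠ v := Finset.ne_of_mem_erase hu
          simp [bump, hne']
        omega
      obtain ⟨m, f, hf0, hfm, hinv, hstep'⟩ := ih (bump H v ε) hhf hbd1 hsum1
      refine ⟨m + 1, fun j => Nat.casesOn j H f, rfl, hfm, ?_, ?_⟩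
      · intro j hj
        cases j with
        | zero => exact ⟨hH, hbd⟩
        | succ k => exact hinv k (by omega)
      · intro j hj
        cases j with
        | zero =>
            refine ⟨v, hvI, ?_⟩
            show f 0 = bump H v 1 ∨ f 0 = bump H v (-1)
            rcases hε with h|h
            · left; rw [hf0, h]
            · right; rw [hf0, h]
        | succ k => exact hstep' k (by omega)

/-- Any two height functions on a finite `R ⊆ ℤ²` that agree on `∂R` are connected by a
finite sequence of height functions agreeing with them on `∂R`, in which consecutive
functions differ by a unit increase or a unit decrease at an interior vertex; i.e. the
single-site flip dynamics on `G(h)` is irreducible. -/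
theorem stmt_14 (R : Finset (ℤ × ℤ)) (hR : R.Nonempty) (H H' : ℤ × ℤ → ℤ)
    (hH : IsHeightFn R H) (hH' : IsHeightFn R H')
    (hbd : ∀ v ∈ bdry R, H v = H' v) :
    ∃ (m : ℕ) (f : ℕ → ℤ × ℤ → ℤ),
      f 0 = H ∧
      (∀ v ∈ R, f m v = H' v) ∧
      (∀ j ≤ m, IsHeightFn R (f j) ∧ ∀ v ∈ bdry R, f j v = H v) ∧
      (∀ j < m, ∃ v ∈ interiorV R,
        f (j + 1) = bump (f j) v 1 ∨ f (j + 1) = bump (f j) v (-1)) := by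
  obtain ⟨m, f, hf0, hfm, hinv, hstep⟩ :=
    main_lemma R H' hH' (∑ v ∈ R, (H v - H' v).natAbs) H hH hbd le_rfl
  refine ⟨m, f, hf0, hfm, fun j hj => ⟨(hinv j hj).1, fun v hv => ?_⟩, hstep⟩
  rw [(hinv j hj).2 v hv, hbd v hv]
end
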